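/- arXiv:2605.02193 — 6 statements merged into one kernel-verified Lean document; each statement's English description precedes it below -/
import Mathlib

section
/- Let k ≥ 1 and let a_1,…,a_k be integers with a_i ≥ 1 for all i. Then the domination polynomial of the caterpillar tree T(a_1,…,a_k) satisfies D(T;x) = Σ_{j≥0} d_j(T) x^j = ∏_{i=1}^k ( x^{a_i} + x(1+x)^{a_i} ). -/
open Polynomial

/-- `S` is a dominating set of `G`: every vertex is in `S` or adjacent to a member of `S`. -/
def SimpleGraph.DomSet {V : Type*} (G : SimpleGraph V) (S : Finset V) : Prop :=
  ∀ v, v ∈ S ∨ ∃ u ∈ S, G.Adj u v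

/-- `domCount G k` is the number of dominating sets of `G` of cardinality `k`. -/
noncomputable def domCount {V : Type*} [Fintype V] (G : SimpleGraph V) (k : ℕ) : ℕ :=
  Nat.card {S : Finset V // G.DomSet S ∧ S.card = k}

/-- The domination polynomial `D(G;x) = Σ_j d_j(G) x^j`. -/
noncomputable def domPoly {V : Type*} [Fintype V] (G : SimpleGraph V) : Polynomial ℤ :=
  ∑ j ∈ Finset.range (Fintype.card V + 1), (domCount G j : Polynomial ℤ) * X ^ j

/-- Vertices of the caterpillar tree: the spine `v_1, …, v_k` together with, for each `i`,
`a i` leaves attached to `v_i`. -/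
def CatVert (k : ℕ) (a : Fin k → ℕ) : Type :=
  Fin k ⊕ (Σ i : Fin k, Fin (a i))

instance (k : ℕ) (a : Fin k → ℕ) : Fintype (CatVert k a) := by
  unfold CatVert; infer_instance

/-- Base edge relation of the caterpillar: consecutive spine vertices are adjacent, and each
leaf is adjacent to its spine vertex. -/
def catRel (k : ℕ) (a : Fin k → ℕ) (x y : CatVert k a) : Prop :=
  (∃ i j : Fin k, (i : ℕ) + 1 = (j : ℕ) ∧ x = Sum.inl i ∧ y = Sum.inl j) ∨
  (∃ (i : Fin k) (ℓ : Fin (a i)), x = Sum.inl i ∧ y = Sum.inr ⟨i, ℓ⟩)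

/-- The caterpillar tree `T(a_1, …, a_k)`. -/
def caterpillar (k : ℕ) (a : Fin k → ℕ) : SimpleGraph (CatVert k a) :=
  SimpleGraph.fromRel (catRel k a)

/-! A leaf is dominated only by itself or by its spine vertex, and a spine vertex `v_i` with
`a_i ≥ 1` leaves is dominated as soon as all those leaves are. Hence `S` dominates `T` iff for
every `i`, `v_i ∈ S` or all leaves of `v_i` lie in `S`: a condition local to each star. The
generating function of dominating sets therefore factors over the stars, and star `i` contributes
`x^{a_i}` (`v_i ∉ S`, all leaves in) plus `x(1+x)^{a_i}` (`v_i ∈ S`, any set of leaves). -/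

open Finset

theorem domPoly_eq_sum_pow_card {V : Type*} [Fintype V] (G : SimpleGraph V)
    [DecidablePred G.DomSet] :
    domPoly G = ∑ S with G.DomSet S, (X : ℤ[X]) ^ #S := by
  classical
  rw [domPoly, ← sum_fiberwise_of_maps_to (g := card) (t := range (Fintype.card V + 1))
    (fun S _ => mem_range_succ_iff.2 (card_le_univ S))]
  refine sum_congr rfl fun j _ => ?_
  rw [sum_congr rfl fun S hS => by rw [(mem_filter.1 hS).2], sum_const, nsmul_eq_mul, filter_filter,
    domCount, Nat.card_eq_fintype_card, Fintype.card_subtype]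

instance (k : ℕ) (a : Fin k → ℕ) : DecidableEq (CatVert k a) :=
  inferInstanceAs (DecidableEq (Fin k ⊕ Σ i, Fin (a i)))

def localCard {m : ℕ} : Option (Finset (Fin m)) → ℕ
  | none => m
  | some t => #t + 1

theorem sum_pow_localCard {R : Type*} [CommSemiring R] (x : R) (m : ℕ) :
    ∑ c : Option (Finset (Fin m)), x ^ localCard c = x ^ m + x * (1 + x) ^ m := by
  have h := Fintype.sum_pow_mul_eq_add_pow (Fin m) x 1
  simp only [one_pow, mul_one, Fintype.card_fin] at h
  rw [Fintype.sum_option, add_comm 1 x, ← h, mul_sum]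
  simp [localCard, pow_succ, mul_comm]

section Caterpillar
variable {k : ℕ} {a : Fin k → ℕ}

def CatVert.spine (i : Fin k) : CatVert k a := Sum.inl i
def CatVert.leaf (i : Fin k) (ℓ : Fin (a i)) : CatVert k a := Sum.inr ⟨i, ℓ⟩

open CatVert

theorem caterpillar_adj_leaf_iff {u : CatVert k a} {i : Fin k} {ℓ : Fin (a i)} :
    (caterpillar k a).Adj u (leaf i ℓ) ↔ u = spine i := by
  rw [caterpillar, SimpleGraph.fromRel_adj]
  unfold catRel leaf spine CatVert at *
  rcases u with j | ⟨j, m⟩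
  · simp only [ne_eq, reduceCtorEq, not_false_eq_true, Sum.inl.injEq, Sum.inr.injEq,
      Sigma.mk.inj_iff]
    grind
  · simp

theorem leaf_mem_of_domSet {S : Finset (CatVert k a)} (hS : (caterpillar k a).DomSet S)
    {i : Fin k} (hi : spine i ∉ S) (ℓ : Fin (a i)) : leaf i ℓ ∈ S := by
  rcases hS (leaf i ℓ) with h | ⟨u, hu, hadj⟩
  · exact h
  · exact absurd (caterpillar_adj_leaf_iff.1 hadj ▸ hu) hi

theorem domSet_of_forall_spine_mem_or_leaf_mem (ha : ∀ i, 1 ≤ a i)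
    {S : Finset (CatVert k a)} (h : ∀ i, spine i ∈ S ∨ ∀ ℓ, leaf i ℓ ∈ S) :
    (caterpillar k a).DomSet S := by
  rintro (i | ⟨i, ℓ⟩)
  · rcases h i with hi | hleaves
    · exact .inl hi
    · exact .inr ⟨leaf i ⟨0, ha i⟩, hleaves _, (caterpillar_adj_leaf_iff.2 rfl).symm⟩
  · rcases h i with hi | hleaves
    · exact .inr ⟨spine i, hi, caterpillar_adj_leaf_iff.2 rfl⟩
    · exact .inl (hleaves ℓ)

/-- The restriction of a dominating set to the star at `v_i`: `none` when `v_i` is absent, which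
forces all its leaves in; `some t` when `v_i` is present together with the leaves in `t`. -/
abbrev LocalConfig (k : ℕ) (a : Fin k → ℕ) : Type :=
  ∀ i : Fin k, Option (Finset (Fin (a i)))

def LocalConfig.toFinset (f : LocalConfig k a) : Finset (CatVert k a) :=
  (univ.filter fun i => (f i).isSome).disjSum (univ.sigma fun i => (f i).getD univ)

def localConfigOf (S : Finset (CatVert k a)) : LocalConfig k a := fun i =>
  if spine i ∈ S then some (univ.filter fun ℓ => leaf i ℓ ∈ S) else none

namespace LocalConfig
variable (f : LocalConfig k a)

theorem spine_mem_toFinset {i : Fin k} : spine i ∈ f.toFinset ↔ (f i).isSome :=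
  inl_mem_disjSum.trans (by simp)

theorem leaf_mem_toFinset {i : Fin k} {ℓ : Fin (a i)} :
    leaf i ℓ ∈ f.toFinset ↔ ℓ ∈ (f i).getD univ :=
  inr_mem_disjSum.trans (by simp)

theorem card_toFinset : #f.toFinset = ∑ i, localCard (f i) := by
  refine (card_disjSum _ _).trans ?_
  rw [card_sigma, card_filter, ← sum_add_distrib]
  refine sum_congr rfl fun i _ => ?_
  cases f i <;> simp [localCard, add_comm]

theorem domSet_toFinset (ha : ∀ i, 1 ≤ a i) : (caterpillar k a).DomSet f.toFinset := by
  refine domSet_of_forall_spine_mem_or_leaf_mem ha fun i => ?_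
  simp only [spine_mem_toFinset, leaf_mem_toFinset]
  cases f i <;> simp

theorem localConfigOf_toFinset : localConfigOf f.toFinset = f := by
  funext i
  cases hf : f i <;> simp [localConfigOf, spine_mem_toFinset, leaf_mem_toFinset, hf]

end LocalConfig

theorem toFinset_localConfigOf {S : Finset (CatVert k a)} (hS : (caterpillar k a).DomSet S) :
    (localConfigOf S).toFinset = S := by
  ext v
  rcases v with i | ⟨i, ℓ⟩
  · show spine i ∈ _ ↔ spine i ∈ S
    by_cases hi : spine i ∈ S <;> simp [LocalConfig.spine_mem_toFinset, localConfigOf, hi]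
  · show leaf i ℓ ∈ _ ↔ leaf i ℓ ∈ S
    by_cases hi : spine i ∈ S
    · simp [LocalConfig.leaf_mem_toFinset, localConfigOf, hi]
    · simp [LocalConfig.leaf_mem_toFinset, localConfigOf, hi, leaf_mem_of_domSet hS hi ℓ]

theorem sum_domSet_pow_card_caterpillar {R : Type*} [CommSemiring R] (x : R)
    (ha : ∀ i, 1 ≤ a i) [DecidablePred (caterpillar k a).DomSet] :
    ∑ S with (caterpillar k a).DomSet S, x ^ #S = ∏ i, (x ^ a i + x * (1 + x) ^ a i) :=
  calc ∑ S with (caterpillar k a).DomSet S, x ^ #S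
      = ∑ f : LocalConfig k a, x ^ #f.toFinset :=
        sum_nbij' localConfigOf LocalConfig.toFinset (fun _ _ => mem_univ _)
          (fun f _ => mem_filter.2 ⟨mem_univ _, f.domSet_toFinset ha⟩)
          (fun _ hS => toFinset_localConfigOf (mem_filter.1 hS).2)
          (fun f _ => f.localConfigOf_toFinset)
          (fun _ hS => by rw [toFinset_localConfigOf (mem_filter.1 hS).2])
    _ = ∑ f : LocalConfig k a, ∏ i, x ^ localCard (f i) := by
        simp_rw [LocalConfig.card_toFinset, prod_pow_eq_pow_sum]
    _ = ∏ i, ∑ c, x ^ localCard c :=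
        (Fintype.prod_sum fun i (c : Option (Finset (Fin (a i)))) => x ^ localCard c).symm
    _ = ∏ i, (x ^ a i + x * (1 + x) ^ a i) := by simp_rw [sum_pow_localCard]

end Caterpillar

theorem caterpillar_domPoly_general (k : ℕ) (a : Fin k → ℕ) (ha : ∀ i, 1 ≤ a i) :
    domPoly (caterpillar k a) =
      ∏ i : Fin k, ((X : Polynomial ℤ) ^ (a i) + X * (1 + X) ^ (a i)) := by
  classical
  rw [domPoly_eq_sum_pow_card, sum_domSet_pow_card_caterpillar _ ha]

/-- The domination polynomial of the caterpillar `T(a_1,…,a_k)` with `a_i ≥ 1` equals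
`∏_{i=1}^k (x^{a_i} + x(1+x)^{a_i})`. -/
theorem caterpillar_domPoly (k : ℕ) (hk : 1 ≤ k) (a : Fin k → ℕ) (ha : ∀ i, 1 ≤ a i) :
    domPoly (caterpillar k a) =
      ∏ i : Fin k, ((X : Polynomial ℤ) ^ (a i) + X * (1 + X) ^ (a i)) :=
  caterpillar_domPoly_general k a ha
end

section
/- Let k ≥ 1 and let a_1,…,a_k be integers with a_i ≥ 1 for all i. Then the coefficient sequence of the polynomial ∏_{i=1}^k ( x^{a_i} + x(1+x)^{a_i} ) is log-concave: writing this polynomial as Σ_j c_j x^j, one has c_j^2 ≥ c_{j−1} c_{j+1} for every j ≥ 1. -/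
open Polynomial Finset

/-- Coefficient sequence of a polynomial, extended by zero to negative indices. -/
def Ecoeff (p : Polynomial ℤ) : ℤ → ℤ := fun n => if 0 ≤ n then p.coeff n.toNat else 0

lemma Ecoeff_neg (p : Polynomial ℤ) {n : ℤ} (h : n < 0) : Ecoeff p n = 0 := by
  simp [Ecoeff, not_le.2 h]

lemma Ecoeff_coe (p : Polynomial ℤ) (n : ℕ) : Ecoeff p (n : ℤ) = p.coeff n := by
  simp [Ecoeff]

/-- All 2×2 minors of the Toeplitz matrix of `f` are nonnegative (PF₂ condition). -/
def TwoPos (f : ℤ → ℤ) : Prop :=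
  ∀ i1 i2 j1 j2 : ℤ, i1 ≤ i2 → j1 ≤ j2 →
    f (j2 - i1) * f (j1 - i2) ≤ f (j1 - i1) * f (j2 - i2)

lemma Ecoeff_mul (p q : Polynomial ℤ) {i j : ℤ} {S : Finset ℤ} (hS : Finset.Icc i j ⊆ S) :
    Ecoeff (p * q) (j - i) = ∑ k ∈ S, Ecoeff p (k - i) * Ecoeff q (j - k) := by
  have hz : ∀ k ∈ S, k ∉ Finset.Icc i j → Ecoeff p (k - i) * Ecoeff q (j - k) = 0 := by
    intro k _ hk
    rw [Finset.mem_Icc, not_and_or] at hk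
    rcases hk with hk | hk
    · rw [Ecoeff_neg p (by omega), zero_mul]
    · rw [Ecoeff_neg q (by omega), mul_zero]
  rw [← Finset.sum_subset hS hz]
  rcases lt_or_ge j i with h | h
  · rw [Finset.Icc_eq_empty (by omega), Finset.sum_empty, Ecoeff_neg _ (by omega)]
  · have hji : (0:ℤ) ≤ j - i := by omega
    set N : ℕ := (j - i).toNat with hN
    have hNj : (N : ℤ) = j - i := Int.toNat_of_nonneg hji
    rw [show j - i = (N : ℤ) from hNj.symm, Ecoeff_coe, Polynomial.coeff_mul,
      Finset.Nat.sum_antidiagonal_eq_sum_range_succ_mk]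
    refine Finset.sum_nbij' (fun m => i + (m : ℤ)) (fun k => (k - i).toNat) ?_ ?_ ?_ ?_ ?_
    · intro m hm
      simp only [Finset.mem_range] at hm
      simp only [Finset.mem_Icc]; omega
    · intro k hk
      simp only [Finset.mem_Icc] at hk
      simp only [Finset.mem_range]; omega
    · intro m hm; simp
    · intro k hk
      simp only [Finset.mem_Icc] at hk
      omega
    · intro m hm
      simp only [Finset.mem_range] at hm
      rw [show i + (m:ℤ) - i = (m:ℤ) by ring, Ecoeff_coe,
        show j - (i + (m:ℤ)) = ((N - m : ℕ) : ℤ) by push_cast; omega, Ecoeff_coe]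

lemma twoPos_mul {p q : Polynomial ℤ}
    (hp0 : ∀ n, 0 ≤ Ecoeff p n) (hq0 : ∀ n, 0 ≤ Ecoeff q n)
    (hp : TwoPos (Ecoeff p)) (hq : TwoPos (Ecoeff q)) :
    TwoPos (Ecoeff (p * q)) := by
  intro i1 i2 j1 j2 hi hj
  set S := Finset.Icc i1 j2 with hSdef
  have e11 : Ecoeff (p*q) (j1 - i1) = ∑ k ∈ S, Ecoeff p (k - i1) * Ecoeff q (j1 - k) :=
    Ecoeff_mul p q (Finset.Icc_subset_Icc le_rfl hj)
  have e22 : Ecoeff (p*q) (j2 - i2) = ∑ k ∈ S, Ecoeff p (k - i2) * Ecoeff q (j2 - k) :=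
    Ecoeff_mul p q (Finset.Icc_subset_Icc hi le_rfl)
  have e21 : Ecoeff (p*q) (j2 - i1) = ∑ k ∈ S, Ecoeff p (k - i1) * Ecoeff q (j2 - k) :=
    Ecoeff_mul p q (Finset.Icc_subset_Icc le_rfl le_rfl)
  have e12 : Ecoeff (p*q) (j1 - i2) = ∑ k ∈ S, Ecoeff p (k - i2) * Ecoeff q (j1 - k) :=
    Ecoeff_mul p q (Finset.Icc_subset_Icc hi hj)
  rw [e11, e22, e21, e12]
  set u : ℤ → ℤ := fun k => Ecoeff p (k - i1) with hu
  set v : ℤ → ℤ := fun k => Ecoeff p (k - i2) with hv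
  set w : ℤ → ℤ := fun k => Ecoeff q (j1 - k) with hw
  set z : ℤ → ℤ := fun k => Ecoeff q (j2 - k) with hz
  -- goal : (∑ u*z)*(∑ v*w) ≤ (∑ u*w)*(∑ v*z)
  have key : ∀ k l : ℤ, 0 ≤ (u k * v l - u l * v k) * (w k * z l - w l * z k) := by
    intro k l
    rcases le_total k l with hkl | hkl
    · have h1 : u l * v k ≤ u k * v l := hp i1 i2 k l hi hkl
      have h2 : w l * z k ≤ w k * z l := by
        have := hq k l j1 j2 hkl hj
        simpa [hw, hz, mul_comm] using this
      exact mul_nonneg (by linarith) (by linarith)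
    · have h1 : u k * v l ≤ u l * v k := hp i1 i2 l k hi hkl
      have h2 : w k * z l ≤ w l * z k := by
        have := hq l k j1 j2 hkl hj
        simpa [hw, hz, mul_comm] using this
      nlinarith [mul_nonneg (sub_nonneg.2 h1) (sub_nonneg.2 h2)]
  have hsum : 0 ≤ ∑ k ∈ S, ∑ l ∈ S, (u k * v l - u l * v k) * (w k * z l - w l * z k) :=
    Finset.sum_nonneg fun k _ => Finset.sum_nonneg fun l _ => key k l
  have expand : ∑ k ∈ S, ∑ l ∈ S, (u k * v l - u l * v k) * (w k * z l - w l * z k)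
      = 2 * ((∑ k ∈ S, u k * w k) * (∑ k ∈ S, v k * z k)
            - (∑ k ∈ S, u k * z k) * (∑ k ∈ S, v k * w k)) := by
    have h4 : ∀ f g : ℤ → ℤ,
        ∑ k ∈ S, ∑ l ∈ S, f k * g l = (∑ k ∈ S, f k) * (∑ l ∈ S, g l) :=
      fun f g => (Finset.sum_mul_sum S S f g).symm
    have step : ∀ k, ∑ l ∈ S, (u k * v l - u l * v k) * (w k * z l - w l * z k)
        = (∑ l ∈ S, (u k * w k) * (v l * z l)) - (∑ l ∈ S, (u k * z k) * (v l * w l))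
          - (∑ l ∈ S, (v k * w k) * (u l * z l)) + (∑ l ∈ S, (v k * z k) * (u l * w l)) := by
      intro k
      have hterm : ∀ l, (u k * v l - u l * v k) * (w k * z l - w l * z k)
          = (u k * w k) * (v l * z l) - (u k * z k) * (v l * w l)
            - (v k * w k) * (u l * z l) + (v k * z k) * (u l * w l) := fun l => by ring
      simp only [hterm, Finset.sum_add_distrib, Finset.sum_sub_distrib]
    calc ∑ k ∈ S, ∑ l ∈ S, (u k * v l - u l * v k) * (w k * z l - w l * z k)
        = ∑ k ∈ S, ((∑ l ∈ S, (u k * w k) * (v l * z l)) - (∑ l ∈ S, (u k * z k) * (v l * w l))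
          - (∑ l ∈ S, (v k * w k) * (u l * z l)) + (∑ l ∈ S, (v k * z k) * (u l * w l))) :=
          Finset.sum_congr rfl fun k _ => step k
      _ = (∑ k ∈ S, ∑ l ∈ S, (u k * w k) * (v l * z l))
          - (∑ k ∈ S, ∑ l ∈ S, (u k * z k) * (v l * w l))
          - (∑ k ∈ S, ∑ l ∈ S, (v k * w k) * (u l * z l))
          + (∑ k ∈ S, ∑ l ∈ S, (v k * z k) * (u l * w l)) := by
          rw [Finset.sum_add_distrib, Finset.sum_sub_distrib, Finset.sum_sub_distrib]
      _ = 2 * ((∑ k ∈ S, u k * w k) * (∑ k ∈ S, v k * z k)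
            - (∑ k ∈ S, u k * z k) * (∑ k ∈ S, v k * w k)) := by
          rw [h4 (fun k => u k * w k) (fun l => v l * z l),
            h4 (fun k => u k * z k) (fun l => v l * w l),
            h4 (fun k => v k * w k) (fun l => u l * z l),
            h4 (fun k => v k * z k) (fun l => u l * w l)]
          ring
  rw [expand] at hsum
  linarith



/-- A sequence positive on an interval `[lo,hi]`, zero outside, with log-concave values,
satisfies the PF₂ condition. -/
lemma twoPos_of_interval (f : ℤ → ℤ) (lo hi : ℤ)
    (h0 : ∀ n, n < lo → f n = 0) (h1 : ∀ n, hi < n → f n = 0)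
    (hpos : ∀ n, lo ≤ n → n ≤ hi → 0 < f n)
    (hlc : ∀ n, lo < n → n < hi → f (n-1) * f (n+1) ≤ f n ^ 2) : TwoPos f := by
  have hnn : ∀ n, 0 ≤ f n := by
    intro n
    rcases lt_or_ge n lo with h | h
    · rw [h0 n h]
    rcases le_or_gt n hi with h' | h'
    · exact (hpos n h h').le
    · rw [h1 n h']
  -- ratio step: f s * f (t+1) ≤ f (s+1) * f t  for lo ≤ s ≤ t
  have ratio : ∀ d : ℕ, ∀ s, lo ≤ s → f s * f (s + d + 1) ≤ f (s + 1) * f (s + d) := by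
    intro d
    induction d with
    | zero => intro s _; simp [mul_comm]
    | succ d ih =>
      intro s hs
      rcases lt_or_ge hi (s + d + 2) with h | h
      · rw [show s + (d+1:ℕ) + 1 = s + d + 2 by push_cast; ring, h1 _ h, mul_zero]
        exact mul_nonneg (hnn _) (hnn _)
      · have hD : 0 < f (s + d + 1) := hpos _ (by omega) (by omega)
        have hC : 0 < f (s + d) := hpos _ (by omega) (by omega)
        have hlc' : f (s + d) * f (s + d + 2) ≤ f (s + d + 1) ^ 2 := by
          have := hlc (s + d + 1) (by omega) (by omega)
          simpa [show s + d + 1 - 1 = s + d by ring, show s + d + 1 + 1 = s + d + 2 by ring]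
            using this
        have hih := ih s hs
        have hgoal : f s * f (s + d + 2) * f (s + d) ≤ f (s + 1) * f (s + d + 1) * f (s + d) := by
          nlinarith [mul_le_mul_of_nonneg_left hlc' (hnn s),
            mul_le_mul_of_nonneg_right hih hD.le]
        have := le_of_mul_le_mul_right hgoal hC
        rw [show s + (d+1:ℕ) + 1 = s + d + 2 by push_cast; ring,
          show s + (d+1:ℕ) = s + d + 1 by push_cast; ring]
        linarith
  -- generalized: f s * f t ≤ f (s+d) * f (t-d)
  have gen : ∀ d : ℕ, ∀ s t, lo ≤ s → t ≤ hi → s + d ≤ t → f s * f t ≤ f (s + d) * f (t - d) := by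
    intro d
    induction d with
    | zero => intro s t _ _ _; simp
    | succ d ih =>
      intro s t hs ht hst
      push_cast at hst ⊢
      rcases eq_or_lt_of_le hst with heq | hlt
      · rw [show s + (d + 1) = t by omega, show t - (d+1) = s by omega, mul_comm]
      · have h1' : f s * f t ≤ f (s + 1) * f (t - 1) := by
          have hd' : (0:ℤ) ≤ t - 1 - s := by omega
          have := ratio (t - 1 - s).toNat s hs
          rw [Int.toNat_of_nonneg hd'] at this
          simpa [show s + (t - 1 - s) + 1 = t by ring, show s + (t - 1 - s) = t - 1 by ring]
            using this
        have h2' := ih (s + 1) (t - 1) (by omega) (by omega) (by omega)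
        push_cast at h2'
        calc f s * f t ≤ f (s + 1) * f (t - 1) := h1'
          _ ≤ f (s + 1 + d) * f (t - 1 - d) := h2'
          _ = f (s + (d + 1)) * f (t - (d + 1)) := by ring_nf
  intro i1 i2 j1 j2 hi12 hj12
  rcases lt_or_ge (j1 - i2) lo with h | h
  · rw [h0 _ h, mul_zero]
    exact mul_nonneg (hnn _) (hnn _)
  rcases lt_or_ge hi (j2 - i1) with h' | h'
  · rw [h1 _ h', zero_mul]
    exact mul_nonneg (hnn _) (hnn _)
  · have hd : (0:ℤ) ≤ i2 - i1 := by omega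
    have := gen (i2 - i1).toNat (j1 - i2) (j2 - i1) h h' (by rw [Int.toNat_of_nonneg hd]; omega)
    rw [Int.toNat_of_nonneg hd] at this
    calc f (j2 - i1) * f (j1 - i2) = f (j1 - i2) * f (j2 - i1) := mul_comm _ _
      _ ≤ f (j1 - i2 + (i2 - i1)) * f (j2 - i1 - (i2 - i1)) := this
      _ = f (j1 - i1) * f (j2 - i2) := by ring_nf







-- coefficients of the factor polynomial
lemma coeff_factor_succ (a n : ℕ) :
    (X ^ a + X * (1 + X) ^ a : Polynomial ℤ).coeff (n + 1)
      = (if n + 1 = a then 1 else 0) + (a.choose n : ℤ) := by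
  rw [Polynomial.coeff_add, Polynomial.coeff_X_pow, Polynomial.coeff_X_mul,
    Polynomial.coeff_one_add_X_pow]

lemma coeff_factor_zero (a : ℕ) (ha : 1 ≤ a) :
    (X ^ a + X * (1 + X) ^ a : Polynomial ℤ).coeff 0 = 0 := by
  rw [Polynomial.coeff_add, Polynomial.coeff_X_pow, Polynomial.mul_coeff_zero]
  simp [Polynomial.coeff_X_zero]
  omega

-- binomial log-concavity: pure case
lemma choose_lc (a k : ℕ) (hk : k + 2 ≤ a) :
    (a.choose k : ℤ) * a.choose (k + 2) ≤ (a.choose (k + 1) : ℤ) ^ 2 := by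
  obtain ⟨e, he⟩ : ∃ e, a = k + e + 2 := ⟨a - k - 2, by omega⟩
  subst he
  have e1' := Nat.choose_succ_right_eq (k + e + 2) k
  have e2' := Nat.choose_succ_right_eq (k + e + 2) (k + 1)
  rw [show k + e + 2 - k = e + 2 by omega] at e1'
  rw [show k + e + 2 - (k + 1) = e + 1 by omega] at e2'
  have e1 : ((k+e+2).choose (k+1) : ℤ) * (k+1) = ((k+e+2).choose k : ℤ) * (e+2) := by
    exact_mod_cast congrArg (Nat.cast : ℕ → ℤ) e1'
  have e2 : ((k+e+2).choose (k+2) : ℤ) * (k+2) = ((k+e+2).choose (k+1) : ℤ) * (e+1) := by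
    exact_mod_cast congrArg (Nat.cast : ℕ → ℤ) e2'
  set c0 := ((k+e+2).choose k : ℤ)
  set c1 := ((k+e+2).choose (k+1) : ℤ)
  set c2 := ((k+e+2).choose (k+2) : ℤ)
  have key : c0 * c2 * (((k:ℤ)+2) * ((e:ℤ)+2)) = c1 ^ 2 * (((k:ℤ)+1) * ((e:ℤ)+1)) := by
    linear_combination (c1 * ((k:ℤ)+1)) * e2 - (c2 * ((k:ℤ)+2)) * e1
  have hc1 : (0:ℤ) ≤ c1 := by positivity
  have hKpos : (0:ℤ) < ((k:ℤ)+2) * ((e:ℤ)+2) := by positivity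
  have : c0 * c2 * (((k:ℤ)+2) * ((e:ℤ)+2)) ≤ c1 ^ 2 * (((k:ℤ)+2) * ((e:ℤ)+2)) := by
    rw [key]; nlinarith [sq_nonneg c1]
  exact le_of_mul_le_mul_right this hKpos

-- perturbed case: the +1 sits at the middle position (n = a, i.e. a = k+2)
lemma choose_lc_mid (k : ℕ) :
    ((k+2).choose k : ℤ) * ((k+2).choose (k+2) : ℤ) ≤ (1 + ((k+2).choose (k+1) : ℤ)) ^ 2 := by
  have e1' := Nat.choose_succ_right_eq (k + 2) k
  rw [show k + 2 - k = 2 by omega] at e1'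
  have e1 : ((k+2).choose (k+1) : ℤ) * (k+1) = ((k+2).choose k : ℤ) * 2 := by
    exact_mod_cast congrArg (Nat.cast : ℕ → ℤ) e1'
  have h1 : ((k+2).choose (k+1) : ℤ) = (k+2 : ℤ) := by
    rw [Nat.choose_succ_self_right]; push_cast; ring
  have h2 : ((k+2).choose (k+2) : ℤ) = 1 := by rw [Nat.choose_self]; norm_num
  rw [h1] at e1
  rw [h1, h2]
  nlinarith [e1]

-- perturbed case: the +1 sits at the right position (n+1 = a, i.e. a = k+3)
lemma choose_lc_right (k : ℕ) :
    ((k+3).choose k : ℤ) * (1 + ((k+3).choose (k+2) : ℤ)) ≤ (((k+3).choose (k+1) : ℤ)) ^ 2 := by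
  have e1' := Nat.choose_succ_right_eq (k + 3) k
  have e2' := Nat.choose_succ_right_eq (k + 3) (k + 1)
  rw [show k + 3 - k = 3 by omega] at e1'
  rw [show k + 3 - (k + 1) = 2 by omega] at e2'
  have e1 : ((k+3).choose (k+1) : ℤ) * (k+1) = ((k+3).choose k : ℤ) * 3 := by
    exact_mod_cast congrArg (Nat.cast : ℕ → ℤ) e1'
  have e2 : ((k+3).choose (k+2) : ℤ) * (k+2) = ((k+3).choose (k+1) : ℤ) * 2 := by
    exact_mod_cast congrArg (Nat.cast : ℕ → ℤ) e2'
  have h3 : ((k+3).choose (k+2) : ℤ) = (k+3 : ℤ) := by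
    rw [Nat.choose_succ_self_right]; push_cast; ring
  rw [h3] at e2 ⊢
  set c0 := ((k+3).choose k : ℤ) with hc0def
  set c1 := ((k+3).choose (k+1) : ℤ) with hc1def
  have hc1 : (0:ℤ) ≤ c1 := by rw [hc1def]; positivity
  have hcoeff : 2*((k:ℤ)+1)*((k:ℤ)+4) ≤ 3*((k:ℤ)+3)*((k:ℤ)+2) := by nlinarith
  have t1 : c0 * ((k:ℤ)+4) * 6 = c1 * (2*((k:ℤ)+1)*((k:ℤ)+4)) := by
    linear_combination (-(2*((k:ℤ)+4))) * e1
  have t2 : c1 * (3*((k:ℤ)+3)*((k:ℤ)+2)) = c1 ^ 2 * 6 := by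
    linear_combination (3*c1) * e2
  have t3 : c0 * ((k:ℤ)+4) * 6 ≤ c1 ^ 2 * 6 := by
    calc c0 * ((k:ℤ)+4) * 6 = c1 * (2*((k:ℤ)+1)*((k:ℤ)+4)) := t1
      _ ≤ c1 * (3*((k:ℤ)+3)*((k:ℤ)+2)) := mul_le_mul_of_nonneg_left hcoeff hc1
      _ = c1 ^ 2 * 6 := t2
  have t4 : c0 * ((k:ℤ)+4) ≤ c1 ^ 2 := le_of_mul_le_mul_right t3 (by norm_num)
  calc c0 * (1 + ((k:ℤ)+3)) = c0 * ((k:ℤ)+4) := by ring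
    _ ≤ c1 ^ 2 := t4

lemma factor_twoPos (a : ℕ) (ha : 1 ≤ a) :
    TwoPos (Ecoeff (X ^ a + X * (1 + X) ^ a : Polynomial ℤ)) := by
  apply twoPos_of_interval _ 1 ((a : ℤ) + 1)
  · -- zero below
    intro n hn
    rcases lt_or_ge n 0 with h | h
    · exact Ecoeff_neg _ h
    · have : n = ((0:ℕ):ℤ) := by omega
      rw [this, Ecoeff_coe, coeff_factor_zero a ha]
  · -- zero above
    intro n hn
    obtain ⟨m, rfl⟩ : ∃ m : ℕ, n = (m:ℤ) := ⟨n.toNat, by omega⟩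
    have hm : a + 2 ≤ m := by omega
    obtain ⟨l, rfl⟩ : ∃ l, m = l + 1 := ⟨m - 1, by omega⟩
    rw [Ecoeff_coe, coeff_factor_succ]
    rw [if_neg (by omega), Nat.choose_eq_zero_of_lt (by omega)]
    norm_num
  · -- positive on the interval
    intro n h1 h2
    obtain ⟨m, rfl⟩ : ∃ m : ℕ, n = (m:ℤ) := ⟨n.toNat, by omega⟩
    obtain ⟨l, rfl⟩ : ∃ l, m = l + 1 := ⟨m - 1, by omega⟩
    rw [Ecoeff_coe, coeff_factor_succ]
    have hch : 0 < (a.choose l : ℤ) := by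
      exact_mod_cast Nat.choose_pos (show l ≤ a by omega)
    have : (0:ℤ) ≤ if l + 1 = a then 1 else 0 := by split <;> norm_num
    linarith
  · -- log-concavity on the interval
    intro n h1 h2
    obtain ⟨k, rfl⟩ : ∃ k : ℕ, n = (k:ℤ) + 2 := ⟨(n-2).toNat, by omega⟩
    have hk2 : k + 2 ≤ a := by omega
    rw [show ((k:ℤ)+2) - 1 = ((k+1 : ℕ) : ℤ) by push_cast; ring,
      show ((k:ℤ)+2) + 1 = ((k+3 : ℕ) : ℤ) by push_cast; ring,
      show ((k:ℤ)+2) = ((k+2 : ℕ) : ℤ) by push_cast; ring,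
      Ecoeff_coe, Ecoeff_coe, Ecoeff_coe,
      show k + 1 = k + 0 + 1 by ring, coeff_factor_succ,
      show k + 0 + 1 = k + 1 by ring,
      show k + 2 = (k + 1) + 1 by ring, coeff_factor_succ,
      show (k+1) + 1 = k + 2 by ring,
      show k + 3 = (k + 2) + 1 by ring, coeff_factor_succ,
      show (k+2) + 1 = k + 3 by ring]
    rw [if_neg (by omega)]  -- k+1 = a impossible
    by_cases hmid : k + 2 = a
    · subst hmid
      rw [if_pos rfl, if_neg (by omega)]
      have := choose_lc_mid k
      nlinarith [this]
    · rw [if_neg hmid]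
      by_cases hright : k + 3 = a
      · subst hright
        rw [if_pos rfl]
        have := choose_lc_right k
        nlinarith [this]
      · rw [if_neg hright]
        have := choose_lc a k hk2
        nlinarith [this]


/-- Good polynomials: nonnegative PF₂ coefficient sequence. -/
def GoodPoly (p : Polynomial ℤ) : Prop := (∀ n, 0 ≤ Ecoeff p n) ∧ TwoPos (Ecoeff p)

lemma goodPoly_one : GoodPoly 1 := by
  have h : ∀ n : ℤ, Ecoeff 1 n = if n = 0 then 1 else 0 := by
    intro n
    unfold Ecoeff
    rcases lt_or_ge n 0 with h | h
    · rw [if_neg (by omega), if_neg (by omega)]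
    · rw [if_pos h, Polynomial.coeff_one]
      by_cases h0 : n = 0
      · subst h0; simp
      · rw [if_neg (by omega), if_neg h0]
  constructor
  · intro n; rw [h]; split <;> norm_num
  · intro i1 i2 j1 j2 hi hj
    rw [h, h, h, h]
    split_ifs <;> omega

lemma goodPoly_mul {p q : Polynomial ℤ} (hp : GoodPoly p) (hq : GoodPoly q) :
    GoodPoly (p * q) := by
  constructor
  · intro n
    rcases lt_or_ge n 0 with h | h
    · rw [Ecoeff_neg _ h]
    · have hrw : n = n - 0 := by ring
      rw [hrw, Ecoeff_mul p q (S := Finset.Icc 0 n) (by simp)]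
      exact Finset.sum_nonneg fun k _ => mul_nonneg (hp.1 _) (hq.1 _)
  · exact twoPos_mul hp.1 hq.1 hp.2 hq.2

lemma goodPoly_prod {ι : Type*} (s : Finset ι) (p : ι → Polynomial ℤ)
    (h : ∀ i ∈ s, GoodPoly (p i)) : GoodPoly (∏ i ∈ s, p i) :=
  Finset.prod_induction p GoodPoly (fun _ _ => goodPoly_mul) goodPoly_one h

lemma goodPoly_factor (a : ℕ) (ha : 1 ≤ a) :
    GoodPoly (X ^ a + X * (1 + X) ^ a : Polynomial ℤ) := by
  refine ⟨?_, factor_twoPos a ha⟩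
  intro n
  rcases lt_or_ge n 0 with h | h
  · rw [Ecoeff_neg _ h]
  · obtain ⟨m, rfl⟩ : ∃ m : ℕ, n = (m:ℤ) := ⟨n.toNat, by omega⟩
    rw [Ecoeff_coe]
    rcases Nat.eq_zero_or_pos m with rfl | hm
    · rw [coeff_factor_zero a ha]
    · obtain ⟨l, rfl⟩ : ∃ l, m = l + 1 := ⟨m - 1, by omega⟩
      rw [coeff_factor_succ]
      have : (0:ℤ) ≤ if l + 1 = a then 1 else 0 := by split <;> norm_num
      have : (0:ℤ) ≤ (a.choose l : ℤ) := by positivity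
      split <;> positivity

/-- The coefficient sequence of `∏_{i=1}^k (x^{a_i} + x(1+x)^{a_i})` (with all `a_i ≥ 1`)
is log-concave: `c_j^2 ≥ c_{j-1} c_{j+1}` for every `j ≥ 1`. -/
theorem caterpillar_poly_log_concave (k : ℕ) (hk : 1 ≤ k) (a : Fin k → ℕ)
    (ha : ∀ i, 1 ≤ a i) (j : ℕ) (hj : 1 ≤ j) :
    (∏ i : Fin k, ((X : Polynomial ℤ) ^ (a i) + X * (1 + X) ^ (a i))).coeff (j - 1) *
        (∏ i : Fin k, ((X : Polynomial ℤ) ^ (a i) + X * (1 + X) ^ (a i))).coeff (j + 1) ≤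
      (∏ i : Fin k, ((X : Polynomial ℤ) ^ (a i) + X * (1 + X) ^ (a i))).coeff j ^ 2 := by
  set P : Polynomial ℤ := ∏ i : Fin k, ((X : Polynomial ℤ) ^ (a i) + X * (1 + X) ^ (a i)) with hP
  have hgood : GoodPoly P :=
    goodPoly_prod Finset.univ _ (fun i _ => goodPoly_factor (a i) (ha i))
  have key := hgood.2 0 1 (j : ℤ) ((j : ℤ) + 1) (by norm_num) (by norm_num)
  have e1 : (j:ℤ) + 1 - 0 = ((j + 1 : ℕ) : ℤ) := by push_cast; ring
  have e2 : (j:ℤ) - 1 = ((j - 1 : ℕ) : ℤ) := by push_cast [hj]; ring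
  have e3 : (j:ℤ) - 0 = ((j : ℕ) : ℤ) := by push_cast; ring
  have e4 : (j:ℤ) + 1 - 1 = ((j : ℕ) : ℤ) := by push_cast; ring
  rw [e1, e2, e3, e4] at key
  simp only [Ecoeff_coe] at key
  have : P.coeff (j - 1) * P.coeff (j + 1) ≤ P.coeff j * P.coeff j := by
    calc P.coeff (j - 1) * P.coeff (j + 1) = P.coeff (j + 1) * P.coeff (j - 1) := mul_comm _ _
      _ ≤ P.coeff j * P.coeff j := key
  calc P.coeff (j - 1) * P.coeff (j + 1) ≤ P.coeff j * P.coeff j := this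
    _ = P.coeff j ^ 2 := (sq _).symm
end

section
/- Let t ≥ 1 and let F_t be the rooted tree whose root c has t children, each the root of a copy of the rooted 3-vertex path L. Then 𝒜_{F_t}(x) = x^{t+1}(2+3x+x^2)^t, ℬ_{F_t}(x) = x^t((1+3x+x^2)^t − (1+x)^t), and 𝒞_{F_t}(x) = x^t(1+x)^t. -/
open Polynomial

/-- `𝒜_S(x)`: generating polynomial (by cardinality) of subsets `S'` containing the root `ρ`
such that every vertex is in `S'` or adjacent to a member of `S'`. -/
noncomputable def stateA {V : Type*} [Fintype V] (G : SimpleGraph V) (ρ : V) :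
    Polynomial ℤ :=
  ∑ j ∈ Finset.range (Fintype.card V + 1),
    (Nat.card {S : Finset V // S.card = j ∧ ρ ∈ S ∧
      ∀ v, v ∈ S ∨ ∃ u ∈ S, G.Adj u v} : Polynomial ℤ) * Polynomial.X ^ j

/-- `ℬ_S(x)`: generating polynomial of subsets `S'` with `ρ ∉ S'`, `ρ` adjacent to a member
of `S'`, and every vertex other than `ρ` in `S'` or adjacent to a member of `S'`. -/
noncomputable def stateB {V : Type*} [Fintype V] (G : SimpleGraph V) (ρ : V) :
    Polynomial ℤ :=
  ∑ j ∈ Finset.range (Fintype.card V + 1),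
    (Nat.card {S : Finset V // S.card = j ∧ ρ ∉ S ∧ (∃ u ∈ S, G.Adj u ρ) ∧
      ∀ v, v ≠ ρ → (v ∈ S ∨ ∃ u ∈ S, G.Adj u v)} : Polynomial ℤ) * Polynomial.X ^ j

/-- `𝒞_S(x)`: generating polynomial of subsets `S'` with `ρ ∉ S'`, `ρ` not adjacent to any
member of `S'`, and every vertex other than `ρ` in `S'` or adjacent to a member of `S'`. -/
noncomputable def stateC {V : Type*} [Fintype V] (G : SimpleGraph V) (ρ : V) :
    Polynomial ℤ :=
  ∑ j ∈ Finset.range (Fintype.card V + 1),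
    (Nat.card {S : Finset V // S.card = j ∧ ρ ∉ S ∧ (¬ ∃ u ∈ S, G.Adj u ρ) ∧
      ∀ v, v ≠ ρ → (v ∈ S ∨ ∃ u ∈ S, G.Adj u v)} : Polynomial ℤ) * Polynomial.X ^ j

/-- Vertices of the rooted gadget `F_t`: a root together with `t` copies of the rooted
three-vertex path `L`. -/
def FVert (t : ℕ) : Type := Unit ⊕ (Fin t × Fin 3)

instance (t : ℕ) : Fintype (FVert t) := by unfold FVert; infer_instance

/-- Base edge relation of `F_t`: the root is joined to the root (vertex `0`) of each copy of
`L`, and each copy of `L` carries path edges `0-1-2`. -/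
def FRel (t : ℕ) (x y : FVert t) : Prop :=
  (∃ ℓ : Fin t, x = Sum.inl () ∧ y = Sum.inr (ℓ, 0)) ∨
  (∃ (ℓ : Fin t) (a b : Fin 3), (SimpleGraph.pathGraph 3).Adj a b ∧
    x = Sum.inr (ℓ, a) ∧ y = Sum.inr (ℓ, b))

/-- The rooted tree `F_t` (root `Sum.inl ()`). -/
def Ftree (t : ℕ) : SimpleGraph (FVert t) := SimpleGraph.fromRel (FRel t)

/-!
A vertex set `S` of `F_t` is determined by whether it contains the root and by its traces
`S_1, …, S_t` on the `t` copies of `L`. A vertex of a copy is dominated by `S` iff it is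
dominated inside the copy by `S_ℓ`, except that the root of the copy is also dominated by the
root of `F_t`. So the defining conditions of `𝒜` and `𝒞` (and of `ℬ + 𝒞`, whose condition no
longer asks the root to be dominated) split into a condition on the root and one and the same
condition on each trace, and each polynomial factors as a root factor times the `t`-th power of
a polynomial counting subsets of `L`; these three local polynomials, `x(2+3x+x²)`, `x(1+x)` and
`x(1+3x+x²)`, are read off from the eight subsets of `L`.
-/

open Finset SimpleGraph

def SimpleGraph.DominatedBy {V : Type*} (G : SimpleGraph V) (S : Finset V) (v : V) : Prop :=
  v ∈ S ∨ ∃ u ∈ S, G.Adj u v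

instance {V : Type*} [DecidableEq V] (G : SimpleGraph V) [DecidableRel G.Adj] (S : Finset V) :
    DecidablePred (G.DominatedBy S) :=
  fun _ => inferInstanceAs (Decidable (_ ∨ _))

instance (n : ℕ) : DecidableRel (pathGraph n).Adj := fun _ _ => decidable_of_iff' _ pathGraph_adj

section GeneratingPolynomials

variable {R : Type*} [CommSemiring R] (x : R)

lemma sum_natCard_mul_pow_eq_sum_filter {V : Type*} [Fintype V] (P : Finset V → Prop)
    [DecidablePred P] :
    ∑ j ∈ range (Fintype.card V + 1), (Nat.card {S : Finset V // #S = j ∧ P S} : R) * x ^ j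
      = ∑ S with P S, x ^ #S := by
  rw [← sum_fiberwise_of_maps_to (g := card) (t := range (Fintype.card V + 1))
    fun S _ => mem_range_succ_iff.2 (card_le_univ S)]
  refine sum_congr rfl fun j _ => ?_
  rw [sum_congr rfl fun S hS => by rw [(mem_filter.1 hS).2], sum_const, nsmul_eq_mul,
    Nat.card_eq_fintype_card, Fintype.card_subtype, filter_filter]
  simp only [and_comm]

lemma sum_pow_card_filter_toLeft_toRight {α β : Type*} [Fintype α] [Fintype β]
    (p : Finset α → Prop) (q : Finset β → Prop) [DecidablePred p] [DecidablePred q] :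
    ∑ S : Finset (α ⊕ β) with p S.toLeft ∧ q S.toRight, x ^ #S
      = (∑ s with p s, x ^ #s) * ∑ s with q s, x ^ #s := by
  rw [sum_filter, sum_filter, sum_filter, sum_mul_sum, ← Fintype.sum_prod_type',
    ← sumEquiv.toEquiv.symm.sum_comp]
  refine Fintype.sum_congr _ _ fun ⟨s, s'⟩ => ?_
  rw [ite_zero_mul_ite_zero]
  simp [card_disjSum, pow_add]

noncomputable def Finset.prodEquivPi (ι κ : Type*) [Fintype ι] :
    Finset (ι × κ) ≃ (ι → Finset κ) where
  toFun T i := T.preimage (Prod.mk i) (Prod.mk_right_injective i).injOn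
  invFun f := (univ.sigma f).map (Equiv.sigmaEquivProd ι κ).toEmbedding
  left_inv T := by ext ⟨i, k⟩; simp
  right_inv f := by ext i k; simp

section ProdEquivPi

variable {ι κ : Type*} [Fintype ι]

lemma Finset.prodEquivPi_apply (T : Finset (ι × κ)) (i : ι) :
    prodEquivPi ι κ T i = T.preimage (Prod.mk i) (Prod.mk_right_injective i).injOn :=
  rfl

lemma Finset.card_prodEquivPi_symm (f : ι → Finset κ) :
    #((prodEquivPi ι κ).symm f) = ∑ i, #(f i) := by
  simp [prodEquivPi, card_sigma]

lemma sum_pow_card_filter_forall_preimage [DecidableEq ι] [Fintype κ] (q : Finset κ → Prop)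
    [DecidablePred q] :
    ∑ T : Finset (ι × κ) with ∀ i, q (T.preimage (Prod.mk i) (Prod.mk_right_injective i).injOn),
      x ^ #T = (∑ s with q s, x ^ #s) ^ Fintype.card ι := by
  have hpi : Fintype.piFinset (fun _ : ι => univ.filter q) = univ.filter fun f => ∀ i, q (f i) := by
    ext; simp
  rw [← card_univ, ← prod_const, prod_univ_sum, hpi, sum_filter, sum_filter,
    ← (prodEquivPi ι κ).symm.sum_comp]
  refine Fintype.sum_congr _ _ fun f => ?_
  simp only [← prodEquivPi_apply, Equiv.apply_symm_apply, card_prodEquivPi_symm,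
    prod_pow_eq_pow_sum]

end ProdEquivPi

lemma sum_pow_card_dominating_pathGraph_three :
    ∑ T : Finset (Fin 3) with ∀ a, (pathGraph 3).DominatedBy T a, x ^ #T
      = x * (1 + 3 * x + x ^ 2) := by
  rw [show (univ.filter fun T : Finset (Fin 3) => ∀ a, (pathGraph 3).DominatedBy T a)
      = {{1}, {0, 1}, {0, 2}, {1, 2}, {0, 1, 2}} by decide]
  simp +decide only [mem_insert, mem_singleton, not_false_eq_true, sum_insert, sum_singleton,
    card_singleton, card_insert_of_notMem, Nat.reduceAdd, pow_one]
  ring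

lemma sum_pow_card_dominating_ne_zero_pathGraph_three :
    ∑ T : Finset (Fin 3) with ∀ a ≠ 0, (pathGraph 3).DominatedBy T a, x ^ #T
      = x * (2 + 3 * x + x ^ 2) := by
  rw [show (univ.filter fun T : Finset (Fin 3) => ∀ a ≠ 0, (pathGraph 3).DominatedBy T a)
      = {{1}, {2}, {0, 1}, {0, 2}, {1, 2}, {0, 1, 2}} by decide]
  simp +decide only [mem_insert, mem_singleton, not_false_eq_true, sum_insert, sum_singleton,
    card_singleton, card_insert_of_notMem, Nat.reduceAdd, pow_one]
  ring

lemma sum_pow_card_dominating_zero_notMem_pathGraph_three :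
    ∑ T : Finset (Fin 3) with 0 ∉ T ∧ ∀ a, (pathGraph 3).DominatedBy T a, x ^ #T
      = x * (1 + x) := by
  rw [show (univ.filter fun T : Finset (Fin 3) => 0 ∉ T ∧ ∀ a, (pathGraph 3).DominatedBy T a)
      = {{1}, {1, 2}} by decide]
  simp +decide only [mem_singleton, not_false_eq_true, sum_insert, sum_singleton,
    card_singleton, card_insert_of_notMem, Nat.reduceAdd, pow_one]
  ring

end GeneratingPolynomials

section StatePolynomials

variable {V : Type*} [Fintype V] (G : SimpleGraph V) (ρ : V)

open Classical in
lemma stateA_eq_sum : stateA G ρ = ∑ S with ρ ∈ S ∧ ∀ v, G.DominatedBy S v, X ^ #S :=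
  sum_natCard_mul_pow_eq_sum_filter X _

open Classical in
lemma stateC_eq_sum :
    stateC G ρ = ∑ S with ρ ∉ S ∧ (¬ ∃ u ∈ S, G.Adj u ρ) ∧ ∀ v ≠ ρ, G.DominatedBy S v, X ^ #S :=
  sum_natCard_mul_pow_eq_sum_filter X _

open Classical in
lemma stateB_add_stateC :
    stateB G ρ + stateC G ρ = ∑ S with ρ ∉ S ∧ ∀ v ≠ ρ, G.DominatedBy S v, X ^ #S := by
  rw [stateB, stateC, sum_natCard_mul_pow_eq_sum_filter, sum_natCard_mul_pow_eq_sum_filter,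
    ← sum_filter_add_sum_filter_not
      (univ.filter fun S : Finset V => ρ ∉ S ∧ ∀ v ≠ ρ, G.DominatedBy S v)
      fun S => ∃ u ∈ S, G.Adj u ρ,
    filter_filter, filter_filter]
  congr 1 <;> refine sum_congr (filter_congr fun S _ => ?_) fun _ _ => rfl <;>
    simp only [DominatedBy] <;> tauto

end StatePolynomials

namespace Ftree

variable {t : ℕ}

-- `FVert t` is not reducible, so `simp` only works with vertices (and `rootPart` below) that
-- are typed at `FVert t` rather than at the underlying sum type.
def root : FVert t := .inl ()

def vert (ℓ : Fin t) (a : Fin 3) : FVert t := .inr (ℓ, a)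

lemma vert_inj {ℓ m : Fin t} {a b : Fin 3} : vert ℓ a = vert m b ↔ ℓ = m ∧ a = b :=
  Sum.inr_injective.eq_iff.trans Prod.mk_inj

lemma root_ne_vert (ℓ : Fin t) (a : Fin 3) : root ≠ vert ℓ a := Sum.inl_ne_inr

lemma exists_fvert {p : FVert t → Prop} : (∃ v, p v) ↔ p root ∨ ∃ ℓ a, p (vert ℓ a) where
  mp := fun ⟨v, hv⟩ => match v with
    | .inl () => .inl hv
    | .inr (ℓ, a) => .inr ⟨ℓ, a, hv⟩
  mpr h := h.elim (⟨root, ·⟩) fun ⟨ℓ, a, h⟩ => ⟨vert ℓ a, h⟩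

lemma forall_fvert {p : FVert t → Prop} : (∀ v, p v) ↔ p root ∧ ∀ ℓ a, p (vert ℓ a) where
  mp h := ⟨h _, fun _ _ => h _⟩
  mpr := fun ⟨h₀, h⟩ v => match v with
    | .inl () => h₀
    | .inr (ℓ, a) => h ℓ a

lemma frel_iff (x y : FVert t) : FRel t x y ↔ (∃ ℓ, x = root ∧ y = vert ℓ 0) ∨
    ∃ ℓ a b, (pathGraph 3).Adj a b ∧ x = vert ℓ a ∧ y = vert ℓ b :=
  Iff.rfl

lemma adj_root_vert {ℓ : Fin t} {a : Fin 3} : (Ftree t).Adj root (vert ℓ a) ↔ a = 0 := by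
  simp [Ftree, frel_iff, vert_inj, root_ne_vert, (root_ne_vert _ _).symm]

lemma adj_vert_vert {ℓ m : Fin t} {a b : Fin 3} :
    (Ftree t).Adj (vert ℓ a) (vert m b) ↔ ℓ = m ∧ (pathGraph 3).Adj a b := by
  simp only [Ftree, fromRel_adj, frel_iff, vert_inj, (root_ne_vert _ _).symm, ne_eq, not_and,
    false_and, exists_false, false_or, ↓existsAndEq, and_true, exists_and_left, true_and,
    @eq_comm _ m, adj_comm (pathGraph 3) b, or_self]
  exact ⟨fun h => ⟨h.2.2, h.2.1⟩, fun h => ⟨fun _ => h.2.ne, h.2, h.1⟩⟩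

def rootPart (S : Finset (FVert t)) : Finset Unit := S.toLeft

noncomputable def copyPart (S : Finset (FVert t)) (ℓ : Fin t) : Finset (Fin 3) :=
  S.toRight.preimage (Prod.mk ℓ) (Prod.mk_right_injective ℓ).injOn

lemma rootPart_eq_univ_iff {S : Finset (FVert t)} : rootPart S = univ ↔ root ∈ S := by
  rw [eq_univ_iff_forall]
  exact Unique.forall_iff.trans mem_toLeft

lemma rootPart_eq_empty_iff {S : Finset (FVert t)} : rootPart S = ∅ ↔ root ∉ S := by
  rw [eq_empty_iff_forall_notMem]
  exact Unique.forall_iff.trans (not_congr mem_toLeft)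

@[simp]
lemma mem_copyPart {S : Finset (FVert t)} {ℓ : Fin t} {a : Fin 3} :
    a ∈ copyPart S ℓ ↔ vert ℓ a ∈ S := by
  simp only [copyPart, mem_preimage]
  exact mem_toRight

lemma sum_pow_card_filter_rootPart_copyPart {R : Type*} [CommSemiring R] (x : R)
    (p : Finset Unit → Prop) (q : Finset (Fin 3) → Prop) [DecidablePred p] [DecidablePred q] :
    ∑ S : Finset (FVert t) with p (rootPart S) ∧ ∀ ℓ, q (copyPart S ℓ), x ^ #S
      = (∑ s with p s, x ^ #s) * (∑ T with q T, x ^ #T) ^ t := by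
  refine (sum_pow_card_filter_toLeft_toRight x p fun T : Finset (Fin t × Fin 3) =>
    ∀ ℓ, q (T.preimage (Prod.mk ℓ) (Prod.mk_right_injective ℓ).injOn)).trans ?_
  congr 1
  -- `Fin t` has two decidability instances for `∀ ℓ, _`; `convert` identifies them.
  convert sum_pow_card_filter_forall_preimage (ι := Fin t) x q using 3
  exact (Fintype.card_fin t).symm

variable (S : Finset (FVert t))

lemma exists_mem_adj_root_iff :
    (∃ u ∈ S, (Ftree t).Adj u root) ↔ ∃ ℓ, 0 ∈ copyPart S ℓ := by
  simp [exists_fvert, adj_comm _ _ root, adj_root_vert]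

lemma dominatedBy_vert_iff (ℓ : Fin t) (a : Fin 3) :
    (Ftree t).DominatedBy S (vert ℓ a) ↔
      (root ∈ S ∧ a = 0) ∨ (pathGraph 3).DominatedBy (copyPart S ℓ) a := by
  simp only [DominatedBy, exists_fvert, adj_root_vert, adj_vert_vert, ↓existsAndEq, true_and,
    mem_copyPart]
  tauto

lemma mem_and_dominating_iff :
    (root ∈ S ∧ ∀ v, (Ftree t).DominatedBy S v) ↔
      rootPart S = univ ∧ ∀ ℓ, ∀ a ≠ 0, (pathGraph 3).DominatedBy (copyPart S ℓ) a := by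
  rw [rootPart_eq_univ_iff, forall_fvert]
  simp only [dominatedBy_vert_iff]
  by_cases hr : root ∈ S <;> simp [hr, DominatedBy, or_iff_not_imp_left]

lemma notMem_and_dominating_off_iff :
    (root ∉ S ∧ ∀ v ≠ root, (Ftree t).DominatedBy S v) ↔
      rootPart S = ∅ ∧ ∀ ℓ a, (pathGraph 3).DominatedBy (copyPart S ℓ) a := by
  rw [rootPart_eq_empty_iff, forall_fvert]
  by_cases hr : root ∈ S <;> simp [hr, dominatedBy_vert_iff, (root_ne_vert _ _).symm]

lemma notMem_and_not_adj_and_dominating_off_iff :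
    (root ∉ S ∧ (¬ ∃ u ∈ S, (Ftree t).Adj u root) ∧ ∀ v ≠ root, (Ftree t).DominatedBy S v) ↔
      rootPart S = ∅ ∧ ∀ ℓ, 0 ∉ copyPart S ℓ ∧ ∀ a, (pathGraph 3).DominatedBy (copyPart S ℓ) a := by
  rw [and_left_comm, notMem_and_dominating_off_iff, exists_mem_adj_root_iff]
  simp only [not_exists, forall_and]
  tauto

lemma stateA_root : stateA (Ftree t) root = X ^ (t + 1) * (2 + 3 * X + X ^ 2) ^ t := by
  calc stateA (Ftree t) root
      = ∑ S : Finset (FVert t) with rootPart S = univ ∧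
          ∀ ℓ, ∀ a ≠ 0, (pathGraph 3).DominatedBy (copyPart S ℓ) a, X ^ #S := by
        rw [stateA_eq_sum]
        refine sum_congr (ext fun S => ?_) fun _ _ => rfl
        simpa only [mem_filter, mem_univ, true_and] using mem_and_dominating_iff S
    _ = _ := by
        rw [sum_pow_card_filter_rootPart_copyPart X (· = univ)
          fun T => ∀ a ≠ 0, (pathGraph 3).DominatedBy T a,
          sum_pow_card_dominating_ne_zero_pathGraph_three, mul_pow]
        simp only [univ_unique, PUnit.default_eq_unit, sum_filter, sum_ite_eq', mem_univ,
          ↓reduceIte, card_singleton, pow_one]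
        ring

lemma stateC_root : stateC (Ftree t) root = X ^ t * (1 + X) ^ t := by
  calc stateC (Ftree t) root
      = ∑ S : Finset (FVert t) with rootPart S = ∅ ∧
          ∀ ℓ, 0 ∉ copyPart S ℓ ∧ ∀ a, (pathGraph 3).DominatedBy (copyPart S ℓ) a, X ^ #S := by
        rw [stateC_eq_sum]
        refine sum_congr (ext fun S => ?_) fun _ _ => rfl
        simpa only [mem_filter, mem_univ, true_and] using
          notMem_and_not_adj_and_dominating_off_iff S
    _ = _ := by
        rw [sum_pow_card_filter_rootPart_copyPart X (· = ∅)
          fun T => 0 ∉ T ∧ ∀ a, (pathGraph 3).DominatedBy T a,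
          sum_pow_card_dominating_zero_notMem_pathGraph_three, mul_pow]
        simp [sum_filter]

lemma stateB_add_stateC_root :
    stateB (Ftree t) root + stateC (Ftree t) root = X ^ t * (1 + 3 * X + X ^ 2) ^ t := by
  calc stateB (Ftree t) root + stateC (Ftree t) root
      = ∑ S : Finset (FVert t) with rootPart S = ∅ ∧
          ∀ ℓ a, (pathGraph 3).DominatedBy (copyPart S ℓ) a, X ^ #S := by
        rw [stateB_add_stateC]
        refine sum_congr (ext fun S => ?_) fun _ _ => rfl
        simpa only [mem_filter, mem_univ, true_and] using notMem_and_dominating_off_iff S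
    _ = _ := by
        rw [sum_pow_card_filter_rootPart_copyPart X (· = ∅)
          fun T => ∀ a, (pathGraph 3).DominatedBy T a,
          sum_pow_card_dominating_pathGraph_three, mul_pow]
        simp [sum_filter]

end Ftree

theorem state_polys_Ftree_general (t : ℕ) :
    stateA (Ftree t) (Sum.inl ()) = X ^ (t + 1) * (2 + 3 * X + X ^ 2) ^ t ∧
    stateB (Ftree t) (Sum.inl ()) =
      X ^ t * ((1 + 3 * X + X ^ 2) ^ t - (1 + X) ^ t) ∧
    stateC (Ftree t) (Sum.inl ()) = X ^ t * (1 + X) ^ t := by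
  refine ⟨Ftree.stateA_root, ?_, Ftree.stateC_root⟩
  have hBC := Ftree.stateB_add_stateC_root (t := t)
  rw [Ftree.stateC_root] at hBC
  rw [mul_sub]
  exact eq_sub_of_add_eq hBC

/-- For the rooted tree `F_t` (a root with `t` children, each the root of a copy of `L`):
`𝒜 = x^{t+1}(2+3x+x^2)^t`, `ℬ = x^t((1+3x+x^2)^t - (1+x)^t)` and `𝒞 = x^t(1+x)^t`. -/
theorem state_polys_Ftree (t : ℕ) (ht : 1 ≤ t) :
    stateA (Ftree t) (Sum.inl ()) = X ^ (t + 1) * (2 + 3 * X + X ^ 2) ^ t ∧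
    stateB (Ftree t) (Sum.inl ()) =
      X ^ t * ((1 + 3 * X + X ^ 2) ^ t - (1 + X) ^ t) ∧
    stateC (Ftree t) (Sum.inl ()) = X ^ t * (1 + X) ^ t :=
  state_polys_Ftree_general t
end

section
/- Let t ≥ 1 and let H_t be the rooted tree whose root has three children, each the root of a copy of F_t. With P_t := (1+3x+x^2)^t, Q_t := (2+3x+x^2)^t, R_t := (P_t − (1+x)^t)/x, U_t := (P_t + x·Q_t)^3 and V_t := (Q_t + R_t)^3 − R_t^3, one has 𝒜_{H_t}(x) = x^{3t+1}·U_t, ℬ_{H_t}(x) = x^{3t+3}·V_t, and 𝒞_{H_t}(x) = x^{3t+3}·R_t^3. -/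
open Polynomial

/-- Vertices of the rooted gadget `H_t`: a root together with three copies of `F_t`. -/
def HVert (t : ℕ) : Type := Unit ⊕ (Fin 3 × FVert t)

instance (t : ℕ) : Fintype (HVert t) := by unfold HVert; infer_instance

/-- Base edge relation of `H_t`: the root is joined to the root of each of three copies of
`F_t`, and each copy carries the edges of `F_t`. -/
def HRel (t : ℕ) (x y : HVert t) : Prop :=
  (∃ b : Fin 3, x = Sum.inl () ∧ y = Sum.inr (b, Sum.inl ())) ∨
  (∃ (b : Fin 3) (p q : FVert t), (Ftree t).Adj p q ∧
    x = Sum.inr (b, p) ∧ y = Sum.inr (b, q))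

/-- The rooted tree `H_t` (root `Sum.inl ()`). -/
def Htree (t : ℕ) : SimpleGraph (HVert t) := SimpleGraph.fromRel (HRel t)

/-- `P_t := (1+3x+x^2)^t`. -/
noncomputable def Ppoly (t : ℕ) : Polynomial ℤ := (1 + 3 * X + X ^ 2) ^ t

/-- `Q_t := (2+3x+x^2)^t`. -/
noncomputable def Qpoly (t : ℕ) : Polynomial ℤ := (2 + 3 * X + X ^ 2) ^ t

/-- `R_t := (P_t - (1+x)^t)/x`, a genuine polynomial since `P_t` and `(1+x)^t` have equal
constant terms (here realized as division by the monic polynomial `X`). -/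
noncomputable def Rpoly (t : ℕ) : Polynomial ℤ := (Ppoly t - (1 + X) ^ t) /ₘ X

/-- `U_t := (P_t + x·Q_t)^3`. -/
noncomputable def Upoly (t : ℕ) : Polynomial ℤ := (Ppoly t + X * Qpoly t) ^ 3

/-- `V_t := (Q_t + R_t)^3 - R_t^3`. -/
noncomputable def Vpoly (t : ℕ) : Polynomial ℤ := (Qpoly t + Rpoly t) ^ 3 - Rpoly t ^ 3

/-!
A vertex set of the tree obtained by joining a new root to the roots of `k` copies of `(G, ρ)`
is determined by whether it contains the new root and by its traces on the copies, and its size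
is the sum of these contributions. If the new root is in the set, each copy must be dominated
except possibly at `ρ`, which gives `x (𝒜 + ℬ + 𝒞)^k`. Otherwise each copy must be dominated
entirely, and the new root is dominated iff some copy contains `ρ`, which gives
`ℬ = (𝒜 + ℬ)^k - ℬ^k` and `𝒞 = ℬ^k`. For `L` one has `𝒜 = x²(2 + x)`, `ℬ = x(1 + x)`, `𝒞 = x`;
joining `t` copies gives `F_t`, and joining three copies of `F_t` gives `H_t`.
-/

open Finset SimpleGraph

section WeightPoly

variable {α : Type*} [Fintype α]

open scoped Classical in
noncomputable def weightPoly (w : α → ℕ) (p : α → Prop) : ℤ[X] :=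
  ∑ a, if p a then X ^ w a else 0

lemma weightPoly_eq_sum_filter (w : α → ℕ) (p : α → Prop) [DecidablePred p] :
    weightPoly w p = ∑ a with p a, X ^ w a := by
  rw [sum_filter, weightPoly]
  congr!

lemma weightPoly_congr (w : α → ℕ) {p q : α → Prop} (h : ∀ a, p a ↔ q a) :
    weightPoly w p = weightPoly w q := by
  rw [funext fun a => propext (h a)]

lemma weightPoly_false (w : α → ℕ) : weightPoly w (fun _ => False) = 0 := by
  simp [weightPoly]

lemma weightPoly_and_add_and_not (w : α → ℕ) (p q : α → Prop) :
    weightPoly w (fun a => p a ∧ q a) + weightPoly w (fun a => p a ∧ ¬q a) = weightPoly w p := by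
  simp only [weightPoly, ← sum_add_distrib]
  refine sum_congr rfl fun a _ => ?_
  by_cases hp : p a <;> by_cases hq : q a <;> simp [hp, hq]

lemma weightPoly_and_not_of_imp (w : α → ℕ) {p q : α → Prop} (h : ∀ a, q a → p a) :
    weightPoly w (fun a => p a ∧ ¬q a) = weightPoly w p - weightPoly w q := by
  rw [← weightPoly_and_add_and_not w p q,
    weightPoly_congr w fun a => and_iff_right_of_imp (h a), add_sub_cancel_left]

lemma weightPoly_pi {ι : Type*} [Fintype ι] [DecidableEq ι] (w : α → ℕ) (p : α → Prop) :
    weightPoly (fun f : ι → α => ∑ i, w (f i)) (fun f => ∀ i, p (f i)) =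
      weightPoly w p ^ Fintype.card ι := by
  unfold weightPoly
  rw [← card_univ, ← prod_const, prod_univ_sum, Fintype.piFinset_univ]
  refine sum_congr rfl fun f _ => ?_
  classical
  simp only [Fintype.prod_ite_zero, prod_pow_eq_pow_sum]

end WeightPoly

def Dominated {V : Type*} (G : SimpleGraph V) (S : Finset V) (v : V) : Prop :=
  v ∈ S ∨ ∃ u ∈ S, G.Adj u v

instance {V : Type*} [DecidableEq V] (G : SimpleGraph V) [DecidableRel G.Adj] (S : Finset V)
    (v : V) : Decidable (Dominated G S v) := by
  unfold Dominated; infer_instance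

lemma forall_dominated_iff {V : Type*} (G : SimpleGraph V) (ρ : V) (S : Finset V) :
    (∀ v, Dominated G S v) ↔ Dominated G S ρ ∧ ∀ v ≠ ρ, Dominated G S v :=
  ⟨fun h => ⟨h ρ, fun v _ => h v⟩, fun h v => (em (v = ρ)).elim (fun hv => hv ▸ h.1) (h.2 v)⟩

section Domination

variable {V : Type*} [Fintype V] (G : SimpleGraph V) (ρ : V)

lemma sum_natCard_mul_X_pow (p : Finset V → Prop) :
    ∑ j ∈ range (Fintype.card V + 1),
      (Nat.card {S : Finset V // S.card = j ∧ p S} : ℤ[X]) * X ^ j = weightPoly card p := by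
  classical
  rw [weightPoly, ← sum_fiberwise_of_maps_to (g := card)
    (fun S _ => mem_range.2 (Nat.lt_succ_of_le (card_le_univ S)))]
  refine sum_congr rfl fun j _ => ?_
  rw [Nat.card_eq_fintype_card, Fintype.card_subtype, ← sum_filter, filter_filter,
    ← nsmul_eq_mul, ← sum_const]
  exact sum_congr (by simp [and_comm]) fun S hS => by rw [(mem_filter.1 hS).2.1]

lemma stateA_eq_weightPoly :
    stateA G ρ = weightPoly card fun S => ρ ∈ S ∧ ∀ v, Dominated G S v :=
  sum_natCard_mul_X_pow _

lemma stateB_eq_weightPoly :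
    stateB G ρ = weightPoly card fun S =>
      ρ ∉ S ∧ (∃ u ∈ S, G.Adj u ρ) ∧ ∀ v ≠ ρ, Dominated G S v :=
  sum_natCard_mul_X_pow _

lemma stateC_eq_weightPoly :
    stateC G ρ = weightPoly card fun S =>
      ρ ∉ S ∧ (¬∃ u ∈ S, G.Adj u ρ) ∧ ∀ v ≠ ρ, Dominated G S v :=
  sum_natCard_mul_X_pow _

lemma weightPoly_dominated_of_ne :
    weightPoly card (fun S => ∀ v ≠ ρ, Dominated G S v) =
      stateA G ρ + stateB G ρ + stateC G ρ := by
  rw [← weightPoly_and_add_and_not card _ (ρ ∈ ·),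
    ← weightPoly_and_add_and_not card (fun S => (∀ v ≠ ρ, Dominated G S v) ∧ ρ ∉ S)
      (fun S => ∃ u ∈ S, G.Adj u ρ), add_assoc, stateA_eq_weightPoly, stateB_eq_weightPoly,
    stateC_eq_weightPoly]
  congr 1
  · exact weightPoly_congr card fun S => by
      rw [forall_dominated_iff G ρ]; unfold Dominated; tauto
  · congr 1 <;> exact weightPoly_congr card fun S => by tauto

lemma weightPoly_dominated :
    weightPoly card (fun S => ∀ v, Dominated G S v) = stateA G ρ + stateB G ρ := by
  rw [← weightPoly_and_add_and_not card _ (fun S : Finset V => ρ ∈ S), stateA_eq_weightPoly,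
    stateB_eq_weightPoly]
  congr 1 <;> refine weightPoly_congr _ fun S => ?_ <;> rw [forall_dominated_iff G ρ] <;>
    unfold Dominated <;> tauto

lemma weightPoly_dominated_and_not_mem :
    weightPoly card (fun S => (∀ v, Dominated G S v) ∧ ρ ∉ S) = stateB G ρ := by
  rw [stateB_eq_weightPoly]
  refine weightPoly_congr _ fun S => ?_
  rw [forall_dominated_iff G ρ]
  unfold Dominated
  tauto

end Domination

section RootedJoin

variable {W : Type*} (k : ℕ) (G : SimpleGraph W) (ρ : W)

/- `Ftree t` and `Htree t` are definitionally `rootedJoin t (pathGraph 3) 0` and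
`rootedJoin 3 (Ftree t) (Sum.inl ())`. -/
def rootedJoin : SimpleGraph (Unit ⊕ (Fin k × W)) :=
  SimpleGraph.fromRel fun x y =>
    (∃ i, x = Sum.inl () ∧ y = Sum.inr (i, ρ)) ∨
    (∃ (i : Fin k) (p q : W), G.Adj p q ∧ x = Sum.inr (i, p) ∧ y = Sum.inr (i, q))

variable {k G ρ}

lemma rootedJoin_adj_inl {u : Unit ⊕ (Fin k × W)} :
    (rootedJoin k G ρ).Adj u (Sum.inl ()) ↔ ∃ i, u = Sum.inr (i, ρ) := by
  aesop (add norm rootedJoin)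

lemma rootedJoin_adj_inr {u : Unit ⊕ (Fin k × W)} {i : Fin k} {w : W} :
    (rootedJoin k G ρ).Adj u (Sum.inr (i, w)) ↔
      (u = Sum.inl () ∧ w = ρ) ∨ ∃ v, G.Adj v w ∧ u = Sum.inr (i, v) := by
  aesop (add norm rootedJoin, safe SimpleGraph.Adj.symm)

variable [Fintype W]

open scoped Classical in
noncomputable def joinFinset (b : Bool) (f : Fin k → Finset W) : Finset (Unit ⊕ (Fin k × W)) :=
  (if b then {()} else ∅ : Finset Unit).disjSum {x | x.2 ∈ f x.1}

@[simp]
lemma inl_mem_joinFinset {b : Bool} {f : Fin k → Finset W} {u : Unit} :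
    Sum.inl u ∈ joinFinset b f ↔ b = true := by
  cases b <;> simp [joinFinset]

@[simp]
lemma inr_mem_joinFinset {b : Bool} {f : Fin k → Finset W} {i : Fin k} {w : W} :
    Sum.inr (i, w) ∈ joinFinset b f ↔ w ∈ f i := by
  simp [joinFinset]

lemma card_joinFinset (b : Bool) (f : Fin k → Finset W) :
    (joinFinset b f).card = b.toNat + ∑ i, (f i).card := by
  classical
  rw [joinFinset, card_disjSum]
  congr 1
  · cases b <;> rfl
  · rw [card_filter, Fintype.sum_prod_type]
    simp

lemma joinFinset_bijective :
    Function.Bijective fun bf : Bool × (Fin k → Finset W) => joinFinset bf.1 bf.2 := by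
  classical
  refine ⟨?_, fun S => ⟨(decide (Sum.inl () ∈ S), fun i => {w | Sum.inr (i, w) ∈ S}), ?_⟩⟩
  · rintro ⟨b, f⟩ ⟨b', f'⟩ (h : joinFinset b f = joinFinset b' f')
    simp only [Prod.mk.injEq]
    refine ⟨Bool.eq_iff_iff.2 ?_, funext fun i => ext fun w => ?_⟩
    · rw [← inl_mem_joinFinset (f := f) (u := ()), h, inl_mem_joinFinset]
    · rw [← inr_mem_joinFinset (b := b), h, inr_mem_joinFinset]
  · ext (⟨⟨⟩⟩ | ⟨i, w⟩) <;> simp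

lemma weightPoly_card_eq_joinFinset (p : Finset (Unit ⊕ (Fin k × W)) → Prop) :
    weightPoly card p =
      X * weightPoly (fun f : Fin k → Finset W => ∑ i, (f i).card) (fun f => p (joinFinset true f)) +
        weightPoly (fun f : Fin k → Finset W => ∑ i, (f i).card) (fun f => p (joinFinset false f)) := by
  unfold weightPoly
  rw [← Fintype.sum_bijective _ joinFinset_bijective _ _ fun _ => rfl, Fintype.sum_prod_type,
    Fintype.sum_bool, mul_sum]
  simp [card_joinFinset, pow_add]

variable {b : Bool} {f : Fin k → Finset W}

lemma dominated_joinFinset_inl :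
    Dominated (rootedJoin k G ρ) (joinFinset b f) (Sum.inl ()) ↔ b = true ∨ ∃ i, ρ ∈ f i := by
  simp [Dominated, rootedJoin_adj_inl]

lemma dominated_joinFinset_inr {i : Fin k} {w : W} :
    Dominated (rootedJoin k G ρ) (joinFinset b f) (Sum.inr (i, w)) ↔
      Dominated G (f i) w ∨ (b = true ∧ w = ρ) := by
  simp [Dominated, rootedJoin_adj_inr, or_comm, or_left_comm]

variable (k G ρ)

theorem stateA_rootedJoin :
    stateA (rootedJoin k G ρ) (Sum.inl ()) = X * (stateA G ρ + stateB G ρ + stateC G ρ) ^ k := by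
  have h_true : ∀ f : Fin k → Finset W,
      (Sum.inl () ∈ joinFinset true f ∧
        ∀ v, Dominated (rootedJoin k G ρ) (joinFinset true f) v) ↔
      ∀ i, ∀ w ≠ ρ, Dominated G (f i) w := by
    intro f
    simp [Sum.forall, Unique.forall_iff, dominated_joinFinset_inl, dominated_joinFinset_inr,
      or_iff_not_imp_right]
  have h_false : ∀ f : Fin k → Finset W,
      (Sum.inl () ∈ joinFinset false f ∧
        ∀ v, Dominated (rootedJoin k G ρ) (joinFinset false f) v) ↔ False := by
    simp
  rw [stateA_eq_weightPoly, weightPoly_card_eq_joinFinset, weightPoly_congr _ h_true,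
    weightPoly_congr _ h_false, weightPoly_false, add_zero,
    weightPoly_pi card (fun s => ∀ w ≠ ρ, Dominated G s w), Fintype.card_fin,
    weightPoly_dominated_of_ne]

theorem stateB_rootedJoin :
    stateB (rootedJoin k G ρ) (Sum.inl ()) = (stateA G ρ + stateB G ρ) ^ k - stateB G ρ ^ k := by
  have h_true : ∀ f : Fin k → Finset W,
      (Sum.inl () ∉ joinFinset true f ∧
        (∃ u ∈ joinFinset true f, (rootedJoin k G ρ).Adj u (Sum.inl ())) ∧
        ∀ v ≠ Sum.inl (), Dominated (rootedJoin k G ρ) (joinFinset true f) v) ↔ False := by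
    simp
  have h_false : ∀ f : Fin k → Finset W,
      (Sum.inl () ∉ joinFinset false f ∧
        (∃ u ∈ joinFinset false f, (rootedJoin k G ρ).Adj u (Sum.inl ())) ∧
        ∀ v ≠ Sum.inl (), Dominated (rootedJoin k G ρ) (joinFinset false f) v) ↔
      (∀ i, ∀ w, Dominated G (f i) w) ∧ ¬∀ i, (∀ w, Dominated G (f i) w) ∧ ρ ∉ f i := by
    intro f
    refine Iff.trans (b := (∃ i, ρ ∈ f i) ∧ ∀ i, ∀ w, Dominated G (f i) w) ?_ (by grind)
    simp [Sum.forall, rootedJoin_adj_inl, dominated_joinFinset_inr]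
  rw [stateB_eq_weightPoly, weightPoly_card_eq_joinFinset, weightPoly_congr _ h_true,
    weightPoly_false, mul_zero, zero_add, weightPoly_congr _ h_false,
    weightPoly_and_not_of_imp _ fun f h i => (h i).1,
    weightPoly_pi card (fun s => ∀ w, Dominated G s w),
    weightPoly_pi card (fun s => (∀ w, Dominated G s w) ∧ ρ ∉ s), Fintype.card_fin,
    weightPoly_dominated, weightPoly_dominated_and_not_mem]

theorem stateC_rootedJoin :
    stateC (rootedJoin k G ρ) (Sum.inl ()) = stateB G ρ ^ k := by
  have h_true : ∀ f : Fin k → Finset W,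
      (Sum.inl () ∉ joinFinset true f ∧
        (¬∃ u ∈ joinFinset true f, (rootedJoin k G ρ).Adj u (Sum.inl ())) ∧
        ∀ v ≠ Sum.inl (), Dominated (rootedJoin k G ρ) (joinFinset true f) v) ↔ False := by
    simp
  have h_false : ∀ f : Fin k → Finset W,
      (Sum.inl () ∉ joinFinset false f ∧
        (¬∃ u ∈ joinFinset false f, (rootedJoin k G ρ).Adj u (Sum.inl ())) ∧
        ∀ v ≠ Sum.inl (), Dominated (rootedJoin k G ρ) (joinFinset false f) v) ↔
      ∀ i, (∀ w, Dominated G (f i) w) ∧ ρ ∉ f i := by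
    intro f
    simp [Sum.forall, rootedJoin_adj_inl, dominated_joinFinset_inr, forall_and, and_comm]
  rw [stateC_eq_weightPoly, weightPoly_card_eq_joinFinset, weightPoly_congr _ h_true,
    weightPoly_false, mul_zero, zero_add, weightPoly_congr _ h_false,
    weightPoly_pi card (fun s => (∀ w, Dominated G s w) ∧ ρ ∉ s), Fintype.card_fin,
    weightPoly_dominated_and_not_mem]

end RootedJoin

lemma stateA_pathGraph_three : stateA (pathGraph 3) 0 = X ^ 2 * (2 + X) := by
  rw [stateA_eq_weightPoly, weightPoly_eq_sum_filter,
    show ({S | _} : Finset (Finset (Fin 3))) = {{0, 1}, {0, 2}, {0, 1, 2}} by decide]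
  simp +decide only [sum_insert, sum_singleton, card_insert_of_notMem, card_singleton,
    mem_insert, mem_singleton]
  ring

lemma stateB_pathGraph_three : stateB (pathGraph 3) 0 = X * (1 + X) := by
  rw [stateB_eq_weightPoly, weightPoly_eq_sum_filter,
    show ({S | _} : Finset (Finset (Fin 3))) = {{1}, {1, 2}} by decide]
  simp +decide only [sum_insert, sum_singleton, card_insert_of_notMem, card_singleton,
    mem_singleton]
  ring

lemma stateC_pathGraph_three : stateC (pathGraph 3) 0 = X := by
  rw [stateC_eq_weightPoly, weightPoly_eq_sum_filter,
    show ({S | _} : Finset (Finset (Fin 3))) = {{2}} by decide]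
  simp

lemma X_mul_Rpoly (t : ℕ) : X * Rpoly t = Ppoly t - (1 + X) ^ t := by
  have hroot : (Ppoly t - (1 + X) ^ t).IsRoot 0 := by simp [Ppoly]
  have h := mul_divByMonic_eq_iff_isRoot.2 hroot
  rwa [map_zero, sub_zero] at h

lemma stateA_Ftree (t : ℕ) : stateA (Ftree t) (Sum.inl ()) = X ^ (t + 1) * Qpoly t := by
  refine (stateA_rootedJoin t (pathGraph 3) 0).trans ?_
  rw [stateA_pathGraph_three, stateB_pathGraph_three, stateC_pathGraph_three,
    show X ^ 2 * (2 + X) + X * (1 + X) + X = X * (2 + 3 * X + X ^ 2) by ring, mul_pow, ← Qpoly]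
  ring

lemma stateB_Ftree (t : ℕ) : stateB (Ftree t) (Sum.inl ()) = X ^ (t + 1) * Rpoly t := by
  refine (stateB_rootedJoin t (pathGraph 3) 0).trans ?_
  rw [stateA_pathGraph_three, stateB_pathGraph_three,
    show X ^ 2 * (2 + X) + X * (1 + X) = X * (1 + 3 * X + X ^ 2) by ring, mul_pow, mul_pow,
    ← Ppoly]
  linear_combination -X ^ t * X_mul_Rpoly t

lemma stateC_Ftree (t : ℕ) : stateC (Ftree t) (Sum.inl ()) = X ^ t * (1 + X) ^ t := by
  rw [← mul_pow, ← stateB_pathGraph_three]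
  exact stateC_rootedJoin t (pathGraph 3) 0

theorem state_polys_Htree_general (t : ℕ) :
    stateA (Htree t) (Sum.inl ()) = X ^ (3 * t + 1) * Upoly t ∧
    stateB (Htree t) (Sum.inl ()) = X ^ (3 * t + 3) * Vpoly t ∧
    stateC (Htree t) (Sum.inl ()) = X ^ (3 * t + 3) * Rpoly t ^ 3 := by
  refine ⟨(stateA_rootedJoin 3 (Ftree t) _).trans ?_, (stateB_rootedJoin 3 (Ftree t) _).trans ?_,
    (stateC_rootedJoin 3 (Ftree t) _).trans ?_⟩
  · have h : X ^ (t + 1) * Qpoly t + X ^ (t + 1) * Rpoly t + X ^ t * (1 + X) ^ t =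
        X ^ t * (Ppoly t + X * Qpoly t) := by
      linear_combination X ^ t * X_mul_Rpoly t
    rw [stateA_Ftree, stateB_Ftree, stateC_Ftree, h, Upoly]
    ring
  · rw [stateA_Ftree, stateB_Ftree, Vpoly]
    ring
  · rw [stateB_Ftree]
    ring

/-- For the rooted tree `H_t` (a root with three children, each the root of a copy of
`F_t`): `𝒜 = x^{3t+1} U_t`, `ℬ = x^{3t+3} V_t` and `𝒞 = x^{3t+3} R_t^3`. -/
theorem state_polys_Htree (t : ℕ) (ht : 1 ≤ t) :
    stateA (Htree t) (Sum.inl ()) = X ^ (3 * t + 1) * Upoly t ∧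
    stateB (Htree t) (Sum.inl ()) = X ^ (3 * t + 3) * Vpoly t ∧
    stateC (Htree t) (Sum.inl ()) = X ^ (3 * t + 3) * Rpoly t ^ 3 :=
  state_polys_Htree_general t
end

section
/- Fix integers q ≥ 0 and u with 0 ≤ u ≤ 2q. With P_t := (1+3x+x^2)^t, Q_t := (2+3x+x^2)^t and U_t := (P_t + x·Q_t)^3, there exist K ≥ 0, constants c, C > 0 and t_0 such that for all integers t ≥ t_0: c · t^{−K} · 2^{ut} ≤ [x^u] (U_t^q) ≤ C · t^K · 2^{ut}. -/
open Polynomial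

/-- ℕ-coefficient version of `Ppoly`. -/
noncomputable def Pn (t : ℕ) : Polynomial ℕ := (1 + 3 * X + X ^ 2) ^ t

/-- ℕ-coefficient version of `Qpoly`. -/
noncomputable def Qn (t : ℕ) : Polynomial ℕ := (2 + 3 * X + X ^ 2) ^ t

/-- ℕ-coefficient version of `Upoly`. -/
noncomputable def Un (t : ℕ) : Polynomial ℕ := (Pn t + X * Qn t) ^ 3

lemma Upoly_eq (t : ℕ) : Upoly t = (Un t).map (Nat.castRingHom ℤ) := by
  simp [Upoly, Un, Ppoly, Qpoly, Pn, Qn, Polynomial.map_pow, Polynomial.map_add,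
    Polynomial.map_mul, Polynomial.map_ofNat]

lemma Un_lower (t q u : ℕ) (hu : u ≤ 3 * q) : 2 ^ (u * t) ≤ ((Un t) ^ q).coeff u := by
  have h1 : (Un t) ^ q = (Pn t + X * Qn t) ^ (3 * q) := by
    rw [Un, ← pow_mul]
  rw [h1, add_pow, finset_sum_coeff]
  have hmem : 3 * q - u ∈ Finset.range (3 * q + 1) := by
    simp
  refine le_trans ?_ (Finset.single_le_sum (fun i _ => Nat.zero_le _) hmem)
  have hexp : 3 * q - (3 * q - u) = u := by omega
  rw [hexp]
  have heq : (Pn t) ^ (3 * q - u) * (X * Qn t) ^ u * (((3 * q).choose (3 * q - u) : ℕ) : ℕ[X])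
      = X ^ u * ((Pn t) ^ (3 * q - u) * (Qn t) ^ u) * C ((3 * q).choose (3 * q - u)) := by
    rw [mul_pow, ← Polynomial.C_eq_natCast]
    simp only [Nat.cast_id]
    ring
  rw [heq, coeff_mul_C]
  have hXp : (X ^ u * (Pn t ^ (3 * q - u) * Qn t ^ u)).coeff u
      = (Pn t ^ (3 * q - u) * Qn t ^ u).coeff 0 := by
    simpa using Polynomial.coeff_X_pow_mul (Pn t ^ (3 * q - u) * Qn t ^ u) u 0
  rw [hXp]
  have hc0 : ((Pn t) ^ (3 * q - u) * (Qn t) ^ u).coeff 0 = 2 ^ (t * u) := by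
    simp [Polynomial.coeff_zero_eq_eval_zero, Pn, Qn, eval_pow, ← pow_mul]
  rw [hc0, mul_comm t u]
  exact Nat.le_mul_of_pos_right _ (Nat.choose_pos (by omega))

lemma coeff_mul_pow_le_eval (f : Polynomial ℕ) (r : ℝ) (hr : 0 ≤ r) (u : ℕ) :
    (f.coeff u : ℝ) * r ^ u ≤ (f.map (Nat.castRingHom ℝ)).eval r := by
  set g := f.map (Nat.castRingHom ℝ) with hgdef
  have hg : ∀ i, g.coeff i = (f.coeff i : ℝ) := fun i => by simp [hgdef, coeff_map]
  have hnn : ∀ i ∈ Finset.range (g.natDegree + 1), 0 ≤ g.coeff i * r ^ i := by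
    intro i _
    exact mul_nonneg (by rw [hg]; positivity) (pow_nonneg hr i)
  rw [Polynomial.eval_eq_sum_range]
  by_cases h : u < g.natDegree + 1
  · have := Finset.single_le_sum hnn (Finset.mem_range.2 h)
    rwa [hg] at this
  · have h0 : g.coeff u = 0 := coeff_eq_zero_of_natDegree_lt (by omega)
    rw [hg] at h0
    rw [h0, zero_mul]
    exact Finset.sum_nonneg hnn

lemma four_mul_le_two_pow : ∀ t : ℕ, 5 ≤ t → 4 * t ≤ 2 ^ t := by
  intro t ht
  induction t with
  | zero => omega
  | succ n ih =>
    rcases Nat.lt_or_ge n 5 with h | h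
    · interval_cases n <;> simp_all
    · have h1 := ih (by omega)
      have h2 : 4 ≤ 2 ^ n := le_trans (by omega) h1
      rw [pow_succ]; omega

lemma exp_one_lt_three : Real.exp 1 < 3 :=
  lt_trans Real.exp_one_lt_d9 (by norm_num)

lemma Un_upper (q u t : ℕ) (ht : 5 ≤ t) :
    (((Un t) ^ q).coeff u : ℝ) ≤ 216 ^ q * 2 ^ (u * t) := by
  set r : ℝ := (2 : ℝ)⁻¹ ^ t with hrdef
  have hr0 : 0 < r := by positivity
  have hrinv : r = ((2 : ℝ) ^ t)⁻¹ := by rw [hrdef, inv_pow]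
  have h2t : (0 : ℝ) < 2 ^ t := by positivity
  have hr1 : r ≤ 1 := by
    rw [hrinv, inv_le_one_iff₀]
    right; exact one_le_pow₀ (by norm_num)
  have h4t : (4 : ℝ) * t ≤ 2 ^ t := by
    exact_mod_cast four_mul_le_two_pow t ht
  have hrt4 : 4 * r * t ≤ 1 := by
    rw [hrinv, show (4:ℝ) * ((2:ℝ)^t)⁻¹ * t = (4*t)/2^t by ring, div_le_one h2t]
    linarith
  have hrt2 : 2 * r * t ≤ 1 := by nlinarith [hr0.le, (Nat.cast_nonneg t : (0:ℝ) ≤ t)]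
  have hPbase : 1 + 3*r + r^2 ≤ Real.exp (4*r) := by
    have h1 : r^2 ≤ r := by nlinarith
    have h3 : (4*r) + 1 ≤ Real.exp (4*r) := Real.add_one_le_exp _
    nlinarith
  have hP : (1 + 3*r + r^2)^t ≤ 3 := by
    calc (1 + 3*r + r^2)^t ≤ (Real.exp (4*r))^t := by
          apply pow_le_pow_left₀ (by positivity) hPbase
      _ = Real.exp (4*r*t) := by rw [← Real.exp_nat_mul]; ring_nf
      _ ≤ Real.exp 1 := Real.exp_le_exp.2 hrt4
      _ ≤ 3 := exp_one_lt_three.le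
  have hQbase : 2 + 3*r + r^2 ≤ 2 * Real.exp (2*r) := by
    have h1 : r^2 ≤ r := by nlinarith
    have h3 : (2*r) + 1 ≤ Real.exp (2*r) := Real.add_one_le_exp _
    nlinarith
  have hQ : (2 + 3*r + r^2)^t ≤ 2^t * 3 := by
    calc (2 + 3*r + r^2)^t ≤ (2 * Real.exp (2*r))^t := by
          apply pow_le_pow_left₀ (by positivity) hQbase
      _ = 2^t * Real.exp (2*r*t) := by
          rw [mul_pow, ← Real.exp_nat_mul]; ring_nf
      _ ≤ 2^t * Real.exp 1 := by
          exact mul_le_mul_of_nonneg_left (Real.exp_le_exp.2 hrt2) (by positivity)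
      _ ≤ 2^t * 3 := by
          exact mul_le_mul_of_nonneg_left exp_one_lt_three.le (by positivity)
  have heval : (((Un t)^q).map (Nat.castRingHom ℝ)).eval r
      = (((1 + 3*r + r^2)^t + r * (2 + 3*r + r^2)^t)^3)^q := by
    simp [Un, Pn, Qn, Polynomial.map_pow, Polynomial.map_add, Polynomial.map_mul,
      Polynomial.map_ofNat, eval_pow, eval_add, eval_mul]
  have hbase_nn : 0 ≤ (1 + 3*r + r^2)^t + r * (2 + 3*r + r^2)^t := by positivity
  have hbase6 : (1 + 3*r + r^2)^t + r * (2 + 3*r + r^2)^t ≤ 6 := by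
    have hmul : r * (2 + 3*r + r^2)^t ≤ r * (2^t * 3) :=
      mul_le_mul_of_nonneg_left hQ hr0.le
    have hr2t : r * (2^t * 3) = 3 := by
      rw [hrinv]; field_simp
    linarith
  have hevle : (((Un t)^q).map (Nat.castRingHom ℝ)).eval r ≤ 216^q := by
    rw [heval]
    calc (((1 + 3*r + r^2)^t + r * (2 + 3*r + r^2)^t)^3)^q
        ≤ ((6:ℝ)^3)^q := by
          apply pow_le_pow_left₀ (by positivity)
          exact pow_le_pow_left₀ hbase_nn hbase6 3
      _ = 216^q := by norm_num
  have hkey := coeff_mul_pow_le_eval ((Un t)^q) r hr0.le u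
  have hru : r^u = ((2:ℝ)^(u*t))⁻¹ := by
    rw [hrdef, ← pow_mul, mul_comm t u, inv_pow]
  have h2ut : (0:ℝ) < 2^(u*t) := by positivity
  have hfin := le_trans hkey hevle
  rw [hru] at hfin
  calc (((Un t)^q).coeff u : ℝ)
      = (((Un t)^q).coeff u : ℝ) * ((2:ℝ)^(u*t))⁻¹ * 2^(u*t) := by field_simp
    _ ≤ 216^q * 2^(u*t) := mul_le_mul_of_nonneg_right hfin h2ut.le

lemma coeff_Upoly_cast (t q u : ℕ) :
    ((Upoly t ^ q).coeff u : ℝ) = (((Un t) ^ q).coeff u : ℝ) := by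
  rw [Upoly_eq, ← Polynomial.map_pow, Polynomial.coeff_map]
  simp

/-- For fixed `q ≥ 0` and `0 ≤ u ≤ 2q`: `[x^u] (U_t^q) = 2^{ut} t^{O(1)}`.  Explicitly,
there exist `K ≥ 0`, `c, C > 0` and `t_0` such that
`c t^{-K} 2^{ut} ≤ [x^u] (U_t^q) ≤ C t^K 2^{ut}` for all `t ≥ t_0`. -/
theorem coeff_U_pow_growth (q u : ℕ) (hu : u ≤ 2 * q) :
    ∃ (K : ℕ) (c C : ℝ), 0 < c ∧ 0 < C ∧ ∃ t0 : ℕ, ∀ t : ℕ, t0 ≤ t →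
      c * 2 ^ (u * t) / (t : ℝ) ^ K ≤ ((Upoly t ^ q).coeff u : ℝ) ∧
      ((Upoly t ^ q).coeff u : ℝ) ≤ C * (t : ℝ) ^ K * 2 ^ (u * t) := by
  refine ⟨0, 1, 216 ^ q, one_pos, by positivity, 5, fun t ht => ?_⟩
  rw [coeff_Upoly_cast]
  constructor
  · have hlow := Un_lower t q u (by omega)
    have hcast : ((2:ℝ)) ^ (u * t) ≤ (((Un t) ^ q).coeff u : ℝ) := by
      exact_mod_cast hlow
    simpa using hcast
  · have := Un_upper q u t ht
    simpa using this
end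

section
/- For all integers m ≥ 1 and t ≥ 1, the domination number of the tree W_{m,t} equals m(3t+1) + 1; that is, the minimum cardinality of a dominating set of W_{m,t} is m(3t+1)+1. -/
/-- The domination number `γ(G)`: the minimum cardinality of a dominating set of `G`. -/
noncomputable def domNumber {V : Type*} [Fintype V] (G : SimpleGraph V) : ℕ :=
  sInf {k | ∃ S : Finset V, G.DomSet S ∧ S.card = k}

/-- Vertices of `W_{m,t}`: a root, `m` copies of `H_t`, and one copy of the rooted
two-vertex path `X`. -/
def WVert (m t : ℕ) : Type := Unit ⊕ ((Fin m × HVert t) ⊕ Fin 2)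

instance (m t : ℕ) : Fintype (WVert m t) := by unfold WVert; infer_instance

/-- Base edge relation of `W_{m,t}`: the root is joined to the root of each copy of `H_t`
and to the root (vertex `0`) of the copy of `X`; each copy of `H_t` carries the edges of
`H_t`; and `X` carries its single edge `0-1`. -/
def WRel (m t : ℕ) (x y : WVert m t) : Prop :=
  (∃ i : Fin m, x = Sum.inl () ∧ y = Sum.inr (Sum.inl (i, Sum.inl ()))) ∨
  (x = Sum.inl () ∧ y = Sum.inr (Sum.inr 0)) ∨
  (∃ (i : Fin m) (p q : HVert t), (Htree t).Adj p q ∧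
    x = Sum.inr (Sum.inl (i, p)) ∧ y = Sum.inr (Sum.inl (i, q))) ∨
  (x = Sum.inr (Sum.inr 0) ∧ y = Sum.inr (Sum.inr 1))

/-- The tree `W_{m,t}`. -/
def Wtree (m t : ℕ) : SimpleGraph (WVert m t) := SimpleGraph.fromRel (WRel m t)

open SimpleGraph Finset

theorem SimpleGraph.DomSet.card_le_of_closedNbhd_subset_fiber {V ι : Type*} [Fintype ι]
    {G : SimpleGraph V} {S : Finset V} (hS : G.DomSet S) (o : V → ι) (x : ι → V)
    (hx : ∀ i u, (u = x i ∨ G.Adj u (x i)) → o u = i) : Fintype.card ι ≤ #S := by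
  classical
  have hsurj : ∀ i, i ∈ S.image o := fun i => by
    obtain ⟨u, hu, hux⟩ : ∃ u ∈ S, u = x i ∨ G.Adj u (x i) := by
      rcases hS (x i) with h | ⟨u, hu, h⟩
      exacts [⟨x i, h, Or.inl rfl⟩, ⟨u, hu, Or.inr h⟩]
    exact mem_image.mpr ⟨u, hu, hx i u hux⟩
  calc Fintype.card ι = #(univ : Finset ι) := card_univ.symm
    _ ≤ #(S.image o) := card_le_card fun i _ => hsurj i
    _ ≤ #S := card_image_le

theorem domNumber_eq_card_of_forall_le {V : Type*} [Fintype V] {G : SimpleGraph V} {S : Finset V}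
    (hS : G.DomSet S) (hmin : ∀ T, G.DomSet T → #S ≤ #T) : domNumber G = #S :=
  IsLeast.csInf_eq ⟨⟨S, hS, rfl⟩, by rintro _ ⟨T, hT, rfl⟩; exact hmin T hT⟩

theorem domNumber_eq_card_of_blocks {V ι : Type*} [Fintype V] [Fintype ι] {G : SimpleGraph V}
    (o : V → ι) (d x : ι → V) (hd : ∀ v, ∃ i, v = d i ∨ G.Adj (d i) v) (hod : ∀ i, o (d i) = i)
    (hx : ∀ i u, (u = x i ∨ G.Adj u (x i)) → o u = i) : domNumber G = Fintype.card ι := by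
  classical
  have hD : G.DomSet (univ.image d) := fun v => by
    obtain ⟨i, rfl | h⟩ := hd v
    · exact Or.inl (mem_image_of_mem d (mem_univ i))
    · exact Or.inr ⟨d i, mem_image_of_mem d (mem_univ i), h⟩
  have hcard : #(univ.image d) = Fintype.card ι := by
    rw [card_image_of_injective _ (Function.LeftInverse.injective hod), card_univ]
  rw [← hcard]
  exact domNumber_eq_card_of_forall_le hD fun T hT =>
    hcard ▸ hT.card_le_of_closedNbhd_subset_fiber o x hx

section Adjacency
variable {m t : ℕ}

theorem Ftree_adj_inl_iff {x : FVert t} :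
    (Ftree t).Adj x (.inl ()) ↔ ∃ ℓ, x = .inr (ℓ, 0) := by
  refine (fromRel_adj (FRel t) _ _).trans ⟨?_, ?_⟩
  · rintro ⟨-, (⟨ℓ, -, h⟩ | ⟨ℓ, a, b, -, -, h⟩) | (⟨ℓ, -, rfl⟩ | ⟨ℓ, a, b, -, h, -⟩)⟩
    · exact nomatch h
    · exact nomatch h
    · exact ⟨ℓ, rfl⟩
    · exact nomatch h
  · rintro ⟨ℓ, rfl⟩
    exact ⟨nofun, .inr (.inl ⟨ℓ, rfl, rfl⟩)⟩

theorem Ftree_adj_inr_iff {x : FVert t} {ℓ : Fin t} {b : Fin 3} :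
    (Ftree t).Adj x (.inr (ℓ, b)) ↔
      (x = .inl () ∧ b = 0) ∨ ∃ a, x = .inr (ℓ, a) ∧ (pathGraph 3).Adj a b := by
  refine (fromRel_adj (FRel t) _ _).trans ⟨?_, ?_⟩
  · rintro ⟨-, (⟨ℓ', rfl, h⟩ | ⟨ℓ', a, b', hab, rfl, h⟩) | (⟨ℓ', h, -⟩ | ⟨ℓ', a, b', hab, h, rfl⟩)⟩
    · cases h; exact .inl ⟨rfl, rfl⟩
    · cases h; exact .inr ⟨a, rfl, hab⟩
    · exact nomatch h
    · cases h; exact .inr ⟨b', rfl, hab.symm⟩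
  · rintro (⟨rfl, rfl⟩ | ⟨a, rfl, hab⟩)
    · exact ⟨nofun, .inl (.inl ⟨ℓ, rfl, rfl⟩)⟩
    · exact ⟨by rintro ⟨⟩; exact hab.ne rfl, .inl (.inr ⟨ℓ, a, b, hab, rfl, rfl⟩)⟩

theorem Htree_adj_inr_iff {x : HVert t} {j : Fin 3} {q : FVert t} :
    (Htree t).Adj x (.inr (j, q)) ↔
      (x = .inl () ∧ q = .inl ()) ∨ ∃ p, x = .inr (j, p) ∧ (Ftree t).Adj p q := by
  refine (fromRel_adj (HRel t) _ _).trans ⟨?_, ?_⟩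
  · rintro ⟨-, (⟨j', rfl, h⟩ | ⟨j', p, q', hpq, rfl, h⟩) | (⟨j', h, -⟩ | ⟨j', p, q', hpq, h, rfl⟩)⟩
    · cases h; exact .inl ⟨rfl, rfl⟩
    · cases h; exact .inr ⟨p, rfl, hpq⟩
    · exact nomatch h
    · cases h; exact .inr ⟨q', rfl, hpq.symm⟩
  · rintro (⟨rfl, rfl⟩ | ⟨p, rfl, hpq⟩)
    · exact ⟨nofun, .inl (.inl ⟨j, rfl, rfl⟩)⟩
    · exact ⟨by rintro ⟨⟩; exact hpq.ne rfl, .inl (.inr ⟨j, p, q, hpq, rfl, rfl⟩)⟩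

theorem Wtree_adj_inr_inl_iff {x : WVert m t} {i : Fin m} {q : HVert t} :
    (Wtree m t).Adj x (.inr (.inl (i, q))) ↔
      (x = .inl () ∧ q = .inl ()) ∨ ∃ p, x = .inr (.inl (i, p)) ∧ (Htree t).Adj p q := by
  refine (fromRel_adj (WRel m t) _ _).trans ⟨?_, ?_⟩
  · rintro ⟨-, (⟨i', rfl, h⟩ | ⟨-, h⟩ | ⟨i', p, q', hpq, rfl, h⟩ | ⟨-, h⟩) |
      (⟨i', h, -⟩ | ⟨h, -⟩ | ⟨i', p, q', hpq, h, rfl⟩ | ⟨h, -⟩)⟩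
    · cases h; exact .inl ⟨rfl, rfl⟩
    · exact nomatch h
    · cases h; exact .inr ⟨p, rfl, hpq⟩
    · exact nomatch h
    · exact nomatch h
    · exact nomatch h
    · cases h; exact .inr ⟨q', rfl, hpq.symm⟩
    · exact nomatch h
  · rintro (⟨rfl, rfl⟩ | ⟨p, rfl, hpq⟩)
    · exact ⟨nofun, .inl (.inl ⟨i, rfl, rfl⟩)⟩
    · exact ⟨by rintro ⟨⟩; exact hpq.ne rfl, .inl (.inr (.inr (.inl ⟨i, p, q, hpq, rfl, rfl⟩)))⟩

theorem Wtree_adj_inr_inr_iff {x : WVert m t} {y : Fin 2} :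
    (Wtree m t).Adj x (.inr (.inr y)) ↔
      (x = .inl () ∧ y = 0) ∨ ∃ z, x = .inr (.inr z) ∧ z ≠ y := by
  refine (fromRel_adj (WRel m t) _ _).trans ⟨?_, ?_⟩
  · rintro ⟨-, (⟨i, -, h⟩ | ⟨rfl, h⟩ | ⟨i, p, q, -, -, h⟩ | ⟨rfl, h⟩) |
      (⟨i, h, -⟩ | ⟨h, -⟩ | ⟨i, p, q, -, h, -⟩ | ⟨h, rfl⟩)⟩
    · exact nomatch h
    · cases h; exact .inl ⟨rfl, rfl⟩
    · exact nomatch h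
    · cases h; exact .inr ⟨0, rfl, by decide⟩
    · exact nomatch h
    · exact nomatch h
    · exact nomatch h
    · cases h; exact .inr ⟨1, rfl, by decide⟩
  · rintro (⟨rfl, rfl⟩ | ⟨z, rfl, hzy⟩)
    · exact ⟨nofun, .inl (.inr (.inl ⟨rfl, rfl⟩))⟩
    · refine ⟨by rintro ⟨⟩; exact hzy rfl, ?_⟩
      obtain ⟨rfl, rfl⟩ | ⟨rfl, rfl⟩ : z = 0 ∧ y = 1 ∨ z = 1 ∧ y = 0 := by
        revert z y; decide
      · exact .inl (.inr (.inr (.inr ⟨rfl, rfl⟩)))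
      · exact .inr (.inr (.inr (.inr ⟨rfl, rfl⟩)))

end Adjacency

/-- `.inl (i, j, ℓ)` is copy `ℓ` of `L` in copy `j` of `F_t` in copy `i` of `H_t`, minus its root;
`.inr (.inl i)` is the rest of copy `i` of `H_t`; `.inr (.inr ())` is `X` together with the root. -/
abbrev WBlock (m t : ℕ) : Type := Fin m × Fin 3 × Fin t ⊕ Fin m ⊕ Unit

theorem card_WBlock (m t : ℕ) : Fintype.card (WBlock m t) = m * (3 * t + 1) + 1 := by
  simp only [Fintype.card_sum, Fintype.card_prod, Fintype.card_fin, Fintype.card_unit]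
  ring

namespace Wtree
variable {m t : ℕ}

def block : WVert m t → WBlock m t
  | .inl () => .inr (.inr ())
  | .inr (.inr _) => .inr (.inr ())
  | .inr (.inl (i, .inl ())) => .inr (.inl i)
  | .inr (.inl (i, .inr (_, .inl ()))) => .inr (.inl i)
  | .inr (.inl (i, .inr (j, .inr (ℓ, a)))) => if a = 0 then .inr (.inl i) else .inl (i, j, ℓ)

def dominator : WBlock m t → WVert m t
  | .inl (i, j, ℓ) => .inr (.inl (i, .inr (j, .inr (ℓ, 1))))
  | .inr (.inl i) => .inr (.inl (i, .inl ()))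
  | .inr (.inr ()) => .inr (.inr 0)

def probe : WBlock m t → WVert m t
  | .inl (i, j, ℓ) => .inr (.inl (i, .inr (j, .inr (ℓ, 2))))
  | .inr (.inl i) => .inr (.inl (i, .inr (0, .inl ())))
  | .inr (.inr ()) => .inr (.inr 1)

theorem block_dominator (b : WBlock m t) : block (dominator b) = b := by
  rcases b with ⟨i, j, ℓ⟩ | i | ⟨⟩ <;> rfl

theorem exists_dominator_eq_or_adj (v : WVert m t) :
    ∃ b, v = dominator b ∨ (Wtree m t).Adj (dominator b) v := by
  rcases v with ⟨⟩ | (⟨i, _ | ⟨j, _ | ⟨ℓ, a⟩⟩⟩ | y)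
  · exact ⟨.inr (.inr ()), .inr (Wtree_adj_inr_inr_iff.mpr (.inl ⟨rfl, rfl⟩)).symm⟩
  · exact ⟨.inr (.inl i), .inl rfl⟩
  · exact ⟨.inr (.inl i), .inr (Wtree_adj_inr_inl_iff.mpr
      (.inr ⟨_, rfl, Htree_adj_inr_iff.mpr (.inl ⟨rfl, rfl⟩)⟩))⟩
  · refine ⟨.inl (i, j, ℓ), ?_⟩
    by_cases ha : a = 1
    · exact .inl (ha ▸ rfl)
    · have h1a : (pathGraph 3).Adj 1 a := pathGraph_adj.mpr (by omega)
      exact .inr (Wtree_adj_inr_inl_iff.mpr (.inr ⟨_, rfl, Htree_adj_inr_iff.mpr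
        (.inr ⟨_, rfl, Ftree_adj_inr_iff.mpr (.inr ⟨1, rfl, h1a⟩)⟩)⟩))
  · refine ⟨.inr (.inr ()), ?_⟩
    by_cases hy : y = 0
    · exact .inl (hy ▸ rfl)
    · exact .inr (Wtree_adj_inr_inr_iff.mpr (.inr ⟨0, rfl, Ne.symm hy⟩))

theorem block_eq_of_closedNbhd_probe (b : WBlock m t) (u : WVert m t)
    (h : u = probe b ∨ (Wtree m t).Adj u (probe b)) : block u = b := by
  rcases h with rfl | h
  · rcases b with ⟨i, j, ℓ⟩ | i | ⟨⟩ <;> rfl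
  rcases b with ⟨i, j, ℓ⟩ | i | ⟨⟩
  · obtain ⟨-, hq⟩ | ⟨p, rfl, hp⟩ := Wtree_adj_inr_inl_iff.mp h
    · exact nomatch hq
    obtain ⟨-, hq⟩ | ⟨q, rfl, hq⟩ := Htree_adj_inr_iff.mp hp
    · exact nomatch hq
    obtain ⟨-, h2⟩ | ⟨a, rfl, ha⟩ := Ftree_adj_inr_iff.mp hq
    · exact absurd h2 (by decide)
    obtain rfl : a = 1 := Fin.ext (by have := pathGraph_adj.mp ha; omega)
    rfl
  · obtain ⟨-, hq⟩ | ⟨p, rfl, hp⟩ := Wtree_adj_inr_inl_iff.mp h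
    · exact nomatch hq
    obtain ⟨rfl, -⟩ | ⟨q, rfl, hq⟩ := Htree_adj_inr_iff.mp hp
    · rfl
    obtain ⟨ℓ, rfl⟩ := Ftree_adj_inl_iff.mp hq
    rfl
  · obtain ⟨-, h1⟩ | ⟨z, rfl, -⟩ := Wtree_adj_inr_inr_iff.mp h
    · exact absurd h1 (by decide)
    · rfl

end Wtree

theorem Wtree_domNumber_general (m t : ℕ) :
    domNumber (Wtree m t) = m * (3 * t + 1) + 1 := by
  rw [domNumber_eq_card_of_blocks Wtree.block Wtree.dominator Wtree.probe
    Wtree.exists_dominator_eq_or_adj Wtree.block_dominator Wtree.block_eq_of_closedNbhd_probe,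
    card_WBlock]

/-- The domination number of `W_{m,t}` equals `m(3t+1) + 1`. -/
theorem Wtree_domNumber (m t : ℕ) (hm : 1 ≤ m) (ht : 1 ≤ t) :
    domNumber (Wtree m t) = m * (3 * t + 1) + 1 :=
  Wtree_domNumber_general m t
end
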